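/- For all parameters λ, λe, μ1, μ2, μ3 > 0 and p ∈ (0,1), if π = (π1,…,π8) is the unique normalized positive solution of the balance equations, then the linear system of thirty-two correlation equations (6a)–(6h) in the unknowns v_{sk} (s = 1,…,8, k = 0,1,2,3) has a unique solution, and the resulting average age of information Δ := v_{10} + v_{20} + ⋯ + v_{80} is strictly positive. -/
import Mathlib


/-- Left-hand sides of the eight balance equations of the finite-state Markov chain,
with states `π1,…,π8` indexed by `Fin 8` (so `π i` is `π_{i+1}`),
`a = λ + λe + μ1 + μ2 + μ3` and `â = a - μ1`. -/
def bLHS (lam lamE mu1 mu2 mu3 : ℝ) (π : Fin 8 → ℝ) : Fin 8 → ℝ :=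
  let a := lam + lamE + mu1 + mu2 + mu3
  let ah := a - mu1
  ![a * π 0, a * π 1, a * π 2, ah * π 3, ah * π 4, ah * π 5, a * π 6, a * π 7]

/-- Right-hand sides of the eight balance equations, with `p̄ = 1 - p`. -/
def bRHS (lam lamE mu1 mu2 mu3 p : ℝ) (π : Fin 8 → ℝ) : Fin 8 → ℝ :=
  let pb := 1 - p
  ![ (lam * pb + mu2 + mu3) * π 0 + lam * pb * (π 2 + π 3),
     (lam * pb + mu2 + mu3) * π 1 + lam * pb * π 4,
     (lam * p + mu2 + mu3) * π 2 + lam * p * (π 0 + π 1),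
     (lam * p + mu2 + mu3) * π 3 + lam * p * π 4 + mu1 * (π 2 + π 7),
     (mu2 + mu3) * π 4 + mu1 * (π 0 + π 1 + π 6),
     (lam * p + lamE + mu2 + mu3) * π 5 + lamE * (π 3 + π 4),
     (lam * pb + lamE + mu2 + mu3) * π 6 + lamE * (π 0 + π 1) + lam * pb * (π 5 + π 7),
     (lam * p + lamE + mu2 + mu3) * π 7 + lamE * π 2 + lam * p * π 6 ]

/-- The thirty-two correlation equations (6a)–(6h): `v s k` is the correlation `v_{(s+1),k}`
for state `s+1` and age component `k ∈ {0,1,2,3}`; `u = (1,1,1,1)`, `û = (1,0,1,1)`. -/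
def corrEq (lam lamE mu1 mu2 mu3 p : ℝ) (π : Fin 8 → ℝ) (v : Fin 8 → Fin 4 → ℝ) : Prop :=
  let a := lam + lamE + mu1 + mu2 + mu3
  let ah := a - mu1
  let pb := 1 - p
  let u : Fin 4 → ℝ := ![1, 1, 1, 1]
  let uh : Fin 4 → ℝ := ![1, 0, 1, 1]
  -- (6a)
  (∀ k : Fin 4, a * v 0 k = u k * π 0
      + lam * pb * ![v 0 0, 0, v 0 2, v 0 3] k
      + mu2 * ![v 0 2, v 0 1, v 0 2, v 0 2] k
      + mu3 * ![v 0 3, v 0 1, v 0 2, v 0 3] k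
      + lam * pb * ![v 2 0, 0, v 2 2, v 2 3] k
      + lam * pb * ![v 3 0, 0, v 3 2, v 3 3] k) ∧
  -- (6b)
  (∀ k : Fin 4, a * v 1 k = u k * π 1
      + lam * pb * ![v 1 0, 0, v 1 2, v 1 3] k
      + mu2 * ![v 1 2, v 1 1, v 1 2, v 1 3] k
      + mu3 * ![v 1 3, v 1 1, v 1 3, v 1 3] k
      + lam * pb * ![v 4 0, 0, v 4 2, v 4 3] k) ∧
  -- (6c)
  (∀ k : Fin 4, a * v 2 k = u k * π 2
      + lam * p * ![v 2 0, v 2 1, 0, v 2 3] k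
      + mu2 * ![v 2 2, v 2 2, v 2 2, v 2 2] k
      + mu3 * ![v 2 3, v 2 1, v 2 2, v 2 3] k
      + lam * p * ![v 0 0, v 0 1, 0, v 0 3] k
      + lam * p * ![v 1 0, v 1 1, 0, v 1 3] k) ∧
  -- (6d)
  (∀ k : Fin 4, ah * v 3 k = uh k * π 3
      + lam * p * (![v 3 0, 0, 0, v 3 3] k + ![v 4 0, 0, 0, v 4 3] k)
      + mu2 * ![v 3 2, 0, v 3 2, v 3 2] k
      + mu3 * ![v 3 3, 0, v 3 2, v 3 3] k
      + mu1 * (![v 2 0, 0, v 2 2, v 2 1] k + ![v 7 0, 0, v 7 2, v 7 1] k)) ∧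
  -- (6e)
  (∀ k : Fin 4, ah * v 4 k = uh k * π 4
      + mu1 * ![v 6 0, 0, v 6 2, v 6 1] k
      + mu2 * ![v 4 2, 0, v 4 2, v 4 3] k
      + mu3 * ![v 4 3, 0, v 4 3, v 4 3] k
      + mu1 * ![v 0 0, 0, v 0 2, v 0 1] k
      + mu1 * ![v 1 0, 0, v 1 2, v 1 1] k) ∧
  -- (6f)
  (∀ k : Fin 4, ah * v 5 k = uh k * π 5
      + lam * p * ![v 5 0, 0, 0, v 5 3] k
      + lamE * (![v 3 0, 0, v 3 2, v 3 0] k + ![v 4 0, 0, v 4 2, v 4 0] k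
          + ![v 5 0, 0, v 5 2, v 5 0] k)
      + mu2 * ![v 5 2, 0, v 5 2, v 5 2] k
      + mu3 * ![v 5 3, 0, v 5 2, v 5 3] k) ∧
  -- (6g)
  (∀ k : Fin 4, a * v 6 k = u k * π 6
      + lam * pb * ![v 5 0, 0, v 5 2, v 5 3] k
      + lam * pb * ![v 6 0, 0, v 6 2, v 6 3] k
      + lam * pb * ![v 7 0, 0, v 7 2, v 7 3] k
      + lamE * ![v 0 0, v 0 1, v 0 2, v 0 0] k
      + lamE * ![v 1 0, v 1 1, v 1 2, v 1 0] k
      + lamE * ![v 6 0, v 6 1, v 6 2, v 6 0] k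
      + mu3 * ![v 6 3, v 6 1, v 6 2, v 6 3] k
      + mu2 * ![v 6 2, v 6 1, v 6 2, v 6 2] k) ∧
  -- (6h)
  (∀ k : Fin 4, a * v 7 k = u k * π 7
      + lam * p * ![v 6 0, v 6 1, 0, v 6 3] k
      + lamE * ![v 2 0, v 2 1, v 2 2, v 2 0] k
      + lamE * ![v 7 0, v 7 1, v 7 2, v 7 0] k
      + mu2 * ![v 7 2, v 7 2, v 7 2, v 7 2] k
      + mu3 * ![v 7 3, v 7 1, v 7 2, v 7 3] k
      + lam * p * ![v 7 0, v 7 1, 0, v 7 3] k)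

set_option maxHeartbeats 4000000

section AoIAux

private lemma fin4c : ∀ k : Fin 4, k = 0 ∨ k = 1 ∨ k = 2 ∨ k = 3 := by decide
private lemma fin8c : ∀ s : Fin 8, s = 0 ∨ s = 1 ∨ s = 2 ∨ s = 3 ∨ s = 4 ∨ s = 5 ∨ s = 6 ∨ s = 7 := by decide
private lemma fin11c : ∀ i : Fin 11, i = 0 ∨ i = 1 ∨ i = 2 ∨ i = 3 ∨ i = 4 ∨ i = 5 ∨ i = 6 ∨ i = 7 ∨ i = 8 ∨ i = 9 ∨ i = 10 := by decide

private def aoiDiag (lam lamE mu1 mu2 mu3 : ℝ) : Fin 8 → ℝ :=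
  ![lam + lamE + mu1 + mu2 + mu3, lam + lamE + mu1 + mu2 + mu3, lam + lamE + mu1 + mu2 + mu3, lam + lamE + mu1 + mu2 + mu3 - mu1, lam + lamE + mu1 + mu2 + mu3 - mu1, lam + lamE + mu1 + mu2 + mu3 - mu1, lam + lamE + mu1 + mu2 + mu3, lam + lamE + mu1 + mu2 + mu3]

private def aoiRHS (lam lamE mu1 mu2 mu3 p : ℝ) (v : Fin 8 → Fin 4 → ℝ) : Fin 8 → Fin 4 → ℝ :=
  ![
    ![lam * (1 - p) * v 0 0 + mu2 * v 0 2 + mu3 * v 0 3 + lam * (1 - p) * v 2 0 + lam * (1 - p) * v 3 0, mu2 * v 0 1 + mu3 * v 0 1, lam * (1 - p) * v 0 2 + mu2 * v 0 2 + mu3 * v 0 2 + lam * (1 - p) * v 2 2 + lam * (1 - p) * v 3 2, lam * (1 - p) * v 0 3 + mu2 * v 0 2 + mu3 * v 0 3 + lam * (1 - p) * v 2 3 + lam * (1 - p) * v 3 3],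
    ![lam * (1 - p) * v 1 0 + mu2 * v 1 2 + mu3 * v 1 3 + lam * (1 - p) * v 4 0, mu2 * v 1 1 + mu3 * v 1 1, lam * (1 - p) * v 1 2 + mu2 * v 1 2 + mu3 * v 1 3 + lam * (1 - p) * v 4 2, lam * (1 - p) * v 1 3 + mu2 * v 1 3 + mu3 * v 1 3 + lam * (1 - p) * v 4 3],
    ![lam * p * v 2 0 + mu2 * v 2 2 + mu3 * v 2 3 + lam * p * v 0 0 + lam * p * v 1 0, lam * p * v 2 1 + mu2 * v 2 2 + mu3 * v 2 1 + lam * p * v 0 1 + lam * p * v 1 1, mu2 * v 2 2 + mu3 * v 2 2, lam * p * v 2 3 + mu2 * v 2 2 + mu3 * v 2 3 + lam * p * v 0 3 + lam * p * v 1 3],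
    ![lam * p * (v 3 0 + v 4 0) + mu2 * v 3 2 + mu3 * v 3 3 + mu1 * (v 2 0 + v 7 0), 0, mu2 * v 3 2 + mu3 * v 3 2 + mu1 * (v 2 2 + v 7 2), lam * p * (v 3 3 + v 4 3) + mu2 * v 3 2 + mu3 * v 3 3 + mu1 * (v 2 1 + v 7 1)],
    ![mu1 * v 6 0 + mu2 * v 4 2 + mu3 * v 4 3 + mu1 * v 0 0 + mu1 * v 1 0, 0, mu1 * v 6 2 + mu2 * v 4 2 + mu3 * v 4 3 + mu1 * v 0 2 + mu1 * v 1 2, mu1 * v 6 1 + mu2 * v 4 3 + mu3 * v 4 3 + mu1 * v 0 1 + mu1 * v 1 1],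
    ![lam * p * v 5 0 + lamE * (v 3 0 + v 4 0 + v 5 0) + mu2 * v 5 2 + mu3 * v 5 3, 0, lamE * (v 3 2 + v 4 2 + v 5 2) + mu2 * v 5 2 + mu3 * v 5 2, lam * p * v 5 3 + lamE * (v 3 0 + v 4 0 + v 5 0) + mu2 * v 5 2 + mu3 * v 5 3],
    ![lam * (1 - p) * v 5 0 + lam * (1 - p) * v 6 0 + lam * (1 - p) * v 7 0 + lamE * v 0 0 + lamE * v 1 0 + lamE * v 6 0 + mu3 * v 6 3 + mu2 * v 6 2, lamE * v 0 1 + lamE * v 1 1 + lamE * v 6 1 + mu3 * v 6 1 + mu2 * v 6 1, lam * (1 - p) * v 5 2 + lam * (1 - p) * v 6 2 + lam * (1 - p) * v 7 2 + lamE * v 0 2 + lamE * v 1 2 + lamE * v 6 2 + mu3 * v 6 2 + mu2 * v 6 2, lam * (1 - p) * v 5 3 + lam * (1 - p) * v 6 3 + lam * (1 - p) * v 7 3 + lamE * v 0 0 + lamE * v 1 0 + lamE * v 6 0 + mu3 * v 6 3 + mu2 * v 6 2],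
    ![lam * p * v 6 0 + lamE * v 2 0 + lamE * v 7 0 + mu2 * v 7 2 + mu3 * v 7 3 + lam * p * v 7 0, lam * p * v 6 1 + lamE * v 2 1 + lamE * v 7 1 + mu2 * v 7 2 + mu3 * v 7 1 + lam * p * v 7 1, lamE * v 2 2 + lamE * v 7 2 + mu2 * v 7 2 + mu3 * v 7 2, lam * p * v 6 3 + lamE * v 2 0 + lamE * v 7 0 + mu2 * v 7 2 + mu3 * v 7 3 + lam * p * v 7 3]]

private def aoiC (π : Fin 8 → ℝ) : Fin 8 → Fin 4 → ℝ :=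
  fun s k => (![![1,1,1,1],![1,1,1,1],![1,1,1,1],![1,0,1,1],![1,0,1,1],![1,0,1,1],![1,1,1,1],![1,1,1,1]] : Fin 8 → Fin 4 → ℝ) s k * π s

private def aoiT (lam lamE mu1 mu2 mu3 p : ℝ) (v : Fin 8 → Fin 4 → ℝ) : Fin 8 → Fin 4 → ℝ :=
  fun s k => aoiDiag lam lamE mu1 mu2 mu3 s * v s k - aoiRHS lam lamE mu1 mu2 mu3 p v s k

private lemma aoiT_lin (lam lamE mu1 mu2 mu3 p : ℝ) : IsLinearMap ℝ (aoiT lam lamE mu1 mu2 mu3 p) := by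
  constructor
  · intro x y
    funext s k
    rcases fin8c s with rfl|rfl|rfl|rfl|rfl|rfl|rfl|rfl <;> rcases fin4c k with rfl|rfl|rfl|rfl
    · show (lam + lamE + mu1 + mu2 + mu3) * (x 0 0 + y 0 0) - (lam * (1 - p) * (x 0 0 + y 0 0) + mu2 * (x 0 2 + y 0 2) + mu3 * (x 0 3 + y 0 3) + lam * (1 - p) * (x 2 0 + y 2 0) + lam * (1 - p) * (x 3 0 + y 3 0)) = ((lam + lamE + mu1 + mu2 + mu3) * x 0 0 - (lam * (1 - p) * x 0 0 + mu2 * x 0 2 + mu3 * x 0 3 + lam * (1 - p) * x 2 0 + lam * (1 - p) * x 3 0)) + ((lam + lamE + mu1 + mu2 + mu3) * y 0 0 - (lam * (1 - p) * y 0 0 + mu2 * y 0 2 + mu3 * y 0 3 + lam * (1 - p) * y 2 0 + lam * (1 - p) * y 3 0))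
      ring
    · show (lam + lamE + mu1 + mu2 + mu3) * (x 0 1 + y 0 1) - (mu2 * (x 0 1 + y 0 1) + mu3 * (x 0 1 + y 0 1)) = ((lam + lamE + mu1 + mu2 + mu3) * x 0 1 - (mu2 * x 0 1 + mu3 * x 0 1)) + ((lam + lamE + mu1 + mu2 + mu3) * y 0 1 - (mu2 * y 0 1 + mu3 * y 0 1))
      ring
    · show (lam + lamE + mu1 + mu2 + mu3) * (x 0 2 + y 0 2) - (lam * (1 - p) * (x 0 2 + y 0 2) + mu2 * (x 0 2 + y 0 2) + mu3 * (x 0 2 + y 0 2) + lam * (1 - p) * (x 2 2 + y 2 2) + lam * (1 - p) * (x 3 2 + y 3 2)) = ((lam + lamE + mu1 + mu2 + mu3) * x 0 2 - (lam * (1 - p) * x 0 2 + mu2 * x 0 2 + mu3 * x 0 2 + lam * (1 - p) * x 2 2 + lam * (1 - p) * x 3 2)) + ((lam + lamE + mu1 + mu2 + mu3) * y 0 2 - (lam * (1 - p) * y 0 2 + mu2 * y 0 2 + mu3 * y 0 2 + lam * (1 - p) * y 2 2 + lam * (1 - p) * y 3 2))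
      ring
    · show (lam + lamE + mu1 + mu2 + mu3) * (x 0 3 + y 0 3) - (lam * (1 - p) * (x 0 3 + y 0 3) + mu2 * (x 0 2 + y 0 2) + mu3 * (x 0 3 + y 0 3) + lam * (1 - p) * (x 2 3 + y 2 3) + lam * (1 - p) * (x 3 3 + y 3 3)) = ((lam + lamE + mu1 + mu2 + mu3) * x 0 3 - (lam * (1 - p) * x 0 3 + mu2 * x 0 2 + mu3 * x 0 3 + lam * (1 - p) * x 2 3 + lam * (1 - p) * x 3 3)) + ((lam + lamE + mu1 + mu2 + mu3) * y 0 3 - (lam * (1 - p) * y 0 3 + mu2 * y 0 2 + mu3 * y 0 3 + lam * (1 - p) * y 2 3 + lam * (1 - p) * y 3 3))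
      ring
    · show (lam + lamE + mu1 + mu2 + mu3) * (x 1 0 + y 1 0) - (lam * (1 - p) * (x 1 0 + y 1 0) + mu2 * (x 1 2 + y 1 2) + mu3 * (x 1 3 + y 1 3) + lam * (1 - p) * (x 4 0 + y 4 0)) = ((lam + lamE + mu1 + mu2 + mu3) * x 1 0 - (lam * (1 - p) * x 1 0 + mu2 * x 1 2 + mu3 * x 1 3 + lam * (1 - p) * x 4 0)) + ((lam + lamE + mu1 + mu2 + mu3) * y 1 0 - (lam * (1 - p) * y 1 0 + mu2 * y 1 2 + mu3 * y 1 3 + lam * (1 - p) * y 4 0))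
      ring
    · show (lam + lamE + mu1 + mu2 + mu3) * (x 1 1 + y 1 1) - (mu2 * (x 1 1 + y 1 1) + mu3 * (x 1 1 + y 1 1)) = ((lam + lamE + mu1 + mu2 + mu3) * x 1 1 - (mu2 * x 1 1 + mu3 * x 1 1)) + ((lam + lamE + mu1 + mu2 + mu3) * y 1 1 - (mu2 * y 1 1 + mu3 * y 1 1))
      ring
    · show (lam + lamE + mu1 + mu2 + mu3) * (x 1 2 + y 1 2) - (lam * (1 - p) * (x 1 2 + y 1 2) + mu2 * (x 1 2 + y 1 2) + mu3 * (x 1 3 + y 1 3) + lam * (1 - p) * (x 4 2 + y 4 2)) = ((lam + lamE + mu1 + mu2 + mu3) * x 1 2 - (lam * (1 - p) * x 1 2 + mu2 * x 1 2 + mu3 * x 1 3 + lam * (1 - p) * x 4 2)) + ((lam + lamE + mu1 + mu2 + mu3) * y 1 2 - (lam * (1 - p) * y 1 2 + mu2 * y 1 2 + mu3 * y 1 3 + lam * (1 - p) * y 4 2))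
      ring
    · show (lam + lamE + mu1 + mu2 + mu3) * (x 1 3 + y 1 3) - (lam * (1 - p) * (x 1 3 + y 1 3) + mu2 * (x 1 3 + y 1 3) + mu3 * (x 1 3 + y 1 3) + lam * (1 - p) * (x 4 3 + y 4 3)) = ((lam + lamE + mu1 + mu2 + mu3) * x 1 3 - (lam * (1 - p) * x 1 3 + mu2 * x 1 3 + mu3 * x 1 3 + lam * (1 - p) * x 4 3)) + ((lam + lamE + mu1 + mu2 + mu3) * y 1 3 - (lam * (1 - p) * y 1 3 + mu2 * y 1 3 + mu3 * y 1 3 + lam * (1 - p) * y 4 3))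
      ring
    · show (lam + lamE + mu1 + mu2 + mu3) * (x 2 0 + y 2 0) - (lam * p * (x 2 0 + y 2 0) + mu2 * (x 2 2 + y 2 2) + mu3 * (x 2 3 + y 2 3) + lam * p * (x 0 0 + y 0 0) + lam * p * (x 1 0 + y 1 0)) = ((lam + lamE + mu1 + mu2 + mu3) * x 2 0 - (lam * p * x 2 0 + mu2 * x 2 2 + mu3 * x 2 3 + lam * p * x 0 0 + lam * p * x 1 0)) + ((lam + lamE + mu1 + mu2 + mu3) * y 2 0 - (lam * p * y 2 0 + mu2 * y 2 2 + mu3 * y 2 3 + lam * p * y 0 0 + lam * p * y 1 0))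
      ring
    · show (lam + lamE + mu1 + mu2 + mu3) * (x 2 1 + y 2 1) - (lam * p * (x 2 1 + y 2 1) + mu2 * (x 2 2 + y 2 2) + mu3 * (x 2 1 + y 2 1) + lam * p * (x 0 1 + y 0 1) + lam * p * (x 1 1 + y 1 1)) = ((lam + lamE + mu1 + mu2 + mu3) * x 2 1 - (lam * p * x 2 1 + mu2 * x 2 2 + mu3 * x 2 1 + lam * p * x 0 1 + lam * p * x 1 1)) + ((lam + lamE + mu1 + mu2 + mu3) * y 2 1 - (lam * p * y 2 1 + mu2 * y 2 2 + mu3 * y 2 1 + lam * p * y 0 1 + lam * p * y 1 1))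
      ring
    · show (lam + lamE + mu1 + mu2 + mu3) * (x 2 2 + y 2 2) - (mu2 * (x 2 2 + y 2 2) + mu3 * (x 2 2 + y 2 2)) = ((lam + lamE + mu1 + mu2 + mu3) * x 2 2 - (mu2 * x 2 2 + mu3 * x 2 2)) + ((lam + lamE + mu1 + mu2 + mu3) * y 2 2 - (mu2 * y 2 2 + mu3 * y 2 2))
      ring
    · show (lam + lamE + mu1 + mu2 + mu3) * (x 2 3 + y 2 3) - (lam * p * (x 2 3 + y 2 3) + mu2 * (x 2 2 + y 2 2) + mu3 * (x 2 3 + y 2 3) + lam * p * (x 0 3 + y 0 3) + lam * p * (x 1 3 + y 1 3)) = ((lam + lamE + mu1 + mu2 + mu3) * x 2 3 - (lam * p * x 2 3 + mu2 * x 2 2 + mu3 * x 2 3 + lam * p * x 0 3 + lam * p * x 1 3)) + ((lam + lamE + mu1 + mu2 + mu3) * y 2 3 - (lam * p * y 2 3 + mu2 * y 2 2 + mu3 * y 2 3 + lam * p * y 0 3 + lam * p * y 1 3))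
      ring
    · show (lam + lamE + mu1 + mu2 + mu3 - mu1) * (x 3 0 + y 3 0) - (lam * p * ((x 3 0 + y 3 0) + (x 4 0 + y 4 0)) + mu2 * (x 3 2 + y 3 2) + mu3 * (x 3 3 + y 3 3) + mu1 * ((x 2 0 + y 2 0) + (x 7 0 + y 7 0))) = ((lam + lamE + mu1 + mu2 + mu3 - mu1) * x 3 0 - (lam * p * (x 3 0 + x 4 0) + mu2 * x 3 2 + mu3 * x 3 3 + mu1 * (x 2 0 + x 7 0))) + ((lam + lamE + mu1 + mu2 + mu3 - mu1) * y 3 0 - (lam * p * (y 3 0 + y 4 0) + mu2 * y 3 2 + mu3 * y 3 3 + mu1 * (y 2 0 + y 7 0)))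
      ring
    · show (lam + lamE + mu1 + mu2 + mu3 - mu1) * (x 3 1 + y 3 1) - (0) = ((lam + lamE + mu1 + mu2 + mu3 - mu1) * x 3 1 - (0)) + ((lam + lamE + mu1 + mu2 + mu3 - mu1) * y 3 1 - (0))
      ring
    · show (lam + lamE + mu1 + mu2 + mu3 - mu1) * (x 3 2 + y 3 2) - (mu2 * (x 3 2 + y 3 2) + mu3 * (x 3 2 + y 3 2) + mu1 * ((x 2 2 + y 2 2) + (x 7 2 + y 7 2))) = ((lam + lamE + mu1 + mu2 + mu3 - mu1) * x 3 2 - (mu2 * x 3 2 + mu3 * x 3 2 + mu1 * (x 2 2 + x 7 2))) + ((lam + lamE + mu1 + mu2 + mu3 - mu1) * y 3 2 - (mu2 * y 3 2 + mu3 * y 3 2 + mu1 * (y 2 2 + y 7 2)))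
      ring
    · show (lam + lamE + mu1 + mu2 + mu3 - mu1) * (x 3 3 + y 3 3) - (lam * p * ((x 3 3 + y 3 3) + (x 4 3 + y 4 3)) + mu2 * (x 3 2 + y 3 2) + mu3 * (x 3 3 + y 3 3) + mu1 * ((x 2 1 + y 2 1) + (x 7 1 + y 7 1))) = ((lam + lamE + mu1 + mu2 + mu3 - mu1) * x 3 3 - (lam * p * (x 3 3 + x 4 3) + mu2 * x 3 2 + mu3 * x 3 3 + mu1 * (x 2 1 + x 7 1))) + ((lam + lamE + mu1 + mu2 + mu3 - mu1) * y 3 3 - (lam * p * (y 3 3 + y 4 3) + mu2 * y 3 2 + mu3 * y 3 3 + mu1 * (y 2 1 + y 7 1)))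
      ring
    · show (lam + lamE + mu1 + mu2 + mu3 - mu1) * (x 4 0 + y 4 0) - (mu1 * (x 6 0 + y 6 0) + mu2 * (x 4 2 + y 4 2) + mu3 * (x 4 3 + y 4 3) + mu1 * (x 0 0 + y 0 0) + mu1 * (x 1 0 + y 1 0)) = ((lam + lamE + mu1 + mu2 + mu3 - mu1) * x 4 0 - (mu1 * x 6 0 + mu2 * x 4 2 + mu3 * x 4 3 + mu1 * x 0 0 + mu1 * x 1 0)) + ((lam + lamE + mu1 + mu2 + mu3 - mu1) * y 4 0 - (mu1 * y 6 0 + mu2 * y 4 2 + mu3 * y 4 3 + mu1 * y 0 0 + mu1 * y 1 0))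
      ring
    · show (lam + lamE + mu1 + mu2 + mu3 - mu1) * (x 4 1 + y 4 1) - (0) = ((lam + lamE + mu1 + mu2 + mu3 - mu1) * x 4 1 - (0)) + ((lam + lamE + mu1 + mu2 + mu3 - mu1) * y 4 1 - (0))
      ring
    · show (lam + lamE + mu1 + mu2 + mu3 - mu1) * (x 4 2 + y 4 2) - (mu1 * (x 6 2 + y 6 2) + mu2 * (x 4 2 + y 4 2) + mu3 * (x 4 3 + y 4 3) + mu1 * (x 0 2 + y 0 2) + mu1 * (x 1 2 + y 1 2)) = ((lam + lamE + mu1 + mu2 + mu3 - mu1) * x 4 2 - (mu1 * x 6 2 + mu2 * x 4 2 + mu3 * x 4 3 + mu1 * x 0 2 + mu1 * x 1 2)) + ((lam + lamE + mu1 + mu2 + mu3 - mu1) * y 4 2 - (mu1 * y 6 2 + mu2 * y 4 2 + mu3 * y 4 3 + mu1 * y 0 2 + mu1 * y 1 2))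
      ring
    · show (lam + lamE + mu1 + mu2 + mu3 - mu1) * (x 4 3 + y 4 3) - (mu1 * (x 6 1 + y 6 1) + mu2 * (x 4 3 + y 4 3) + mu3 * (x 4 3 + y 4 3) + mu1 * (x 0 1 + y 0 1) + mu1 * (x 1 1 + y 1 1)) = ((lam + lamE + mu1 + mu2 + mu3 - mu1) * x 4 3 - (mu1 * x 6 1 + mu2 * x 4 3 + mu3 * x 4 3 + mu1 * x 0 1 + mu1 * x 1 1)) + ((lam + lamE + mu1 + mu2 + mu3 - mu1) * y 4 3 - (mu1 * y 6 1 + mu2 * y 4 3 + mu3 * y 4 3 + mu1 * y 0 1 + mu1 * y 1 1))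
      ring
    · show (lam + lamE + mu1 + mu2 + mu3 - mu1) * (x 5 0 + y 5 0) - (lam * p * (x 5 0 + y 5 0) + lamE * ((x 3 0 + y 3 0) + (x 4 0 + y 4 0) + (x 5 0 + y 5 0)) + mu2 * (x 5 2 + y 5 2) + mu3 * (x 5 3 + y 5 3)) = ((lam + lamE + mu1 + mu2 + mu3 - mu1) * x 5 0 - (lam * p * x 5 0 + lamE * (x 3 0 + x 4 0 + x 5 0) + mu2 * x 5 2 + mu3 * x 5 3)) + ((lam + lamE + mu1 + mu2 + mu3 - mu1) * y 5 0 - (lam * p * y 5 0 + lamE * (y 3 0 + y 4 0 + y 5 0) + mu2 * y 5 2 + mu3 * y 5 3))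
      ring
    · show (lam + lamE + mu1 + mu2 + mu3 - mu1) * (x 5 1 + y 5 1) - (0) = ((lam + lamE + mu1 + mu2 + mu3 - mu1) * x 5 1 - (0)) + ((lam + lamE + mu1 + mu2 + mu3 - mu1) * y 5 1 - (0))
      ring
    · show (lam + lamE + mu1 + mu2 + mu3 - mu1) * (x 5 2 + y 5 2) - (lamE * ((x 3 2 + y 3 2) + (x 4 2 + y 4 2) + (x 5 2 + y 5 2)) + mu2 * (x 5 2 + y 5 2) + mu3 * (x 5 2 + y 5 2)) = ((lam + lamE + mu1 + mu2 + mu3 - mu1) * x 5 2 - (lamE * (x 3 2 + x 4 2 + x 5 2) + mu2 * x 5 2 + mu3 * x 5 2)) + ((lam + lamE + mu1 + mu2 + mu3 - mu1) * y 5 2 - (lamE * (y 3 2 + y 4 2 + y 5 2) + mu2 * y 5 2 + mu3 * y 5 2))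
      ring
    · show (lam + lamE + mu1 + mu2 + mu3 - mu1) * (x 5 3 + y 5 3) - (lam * p * (x 5 3 + y 5 3) + lamE * ((x 3 0 + y 3 0) + (x 4 0 + y 4 0) + (x 5 0 + y 5 0)) + mu2 * (x 5 2 + y 5 2) + mu3 * (x 5 3 + y 5 3)) = ((lam + lamE + mu1 + mu2 + mu3 - mu1) * x 5 3 - (lam * p * x 5 3 + lamE * (x 3 0 + x 4 0 + x 5 0) + mu2 * x 5 2 + mu3 * x 5 3)) + ((lam + lamE + mu1 + mu2 + mu3 - mu1) * y 5 3 - (lam * p * y 5 3 + lamE * (y 3 0 + y 4 0 + y 5 0) + mu2 * y 5 2 + mu3 * y 5 3))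
      ring
    · show (lam + lamE + mu1 + mu2 + mu3) * (x 6 0 + y 6 0) - (lam * (1 - p) * (x 5 0 + y 5 0) + lam * (1 - p) * (x 6 0 + y 6 0) + lam * (1 - p) * (x 7 0 + y 7 0) + lamE * (x 0 0 + y 0 0) + lamE * (x 1 0 + y 1 0) + lamE * (x 6 0 + y 6 0) + mu3 * (x 6 3 + y 6 3) + mu2 * (x 6 2 + y 6 2)) = ((lam + lamE + mu1 + mu2 + mu3) * x 6 0 - (lam * (1 - p) * x 5 0 + lam * (1 - p) * x 6 0 + lam * (1 - p) * x 7 0 + lamE * x 0 0 + lamE * x 1 0 + lamE * x 6 0 + mu3 * x 6 3 + mu2 * x 6 2)) + ((lam + lamE + mu1 + mu2 + mu3) * y 6 0 - (lam * (1 - p) * y 5 0 + lam * (1 - p) * y 6 0 + lam * (1 - p) * y 7 0 + lamE * y 0 0 + lamE * y 1 0 + lamE * y 6 0 + mu3 * y 6 3 + mu2 * y 6 2))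
      ring
    · show (lam + lamE + mu1 + mu2 + mu3) * (x 6 1 + y 6 1) - (lamE * (x 0 1 + y 0 1) + lamE * (x 1 1 + y 1 1) + lamE * (x 6 1 + y 6 1) + mu3 * (x 6 1 + y 6 1) + mu2 * (x 6 1 + y 6 1)) = ((lam + lamE + mu1 + mu2 + mu3) * x 6 1 - (lamE * x 0 1 + lamE * x 1 1 + lamE * x 6 1 + mu3 * x 6 1 + mu2 * x 6 1)) + ((lam + lamE + mu1 + mu2 + mu3) * y 6 1 - (lamE * y 0 1 + lamE * y 1 1 + lamE * y 6 1 + mu3 * y 6 1 + mu2 * y 6 1))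
      ring
    · show (lam + lamE + mu1 + mu2 + mu3) * (x 6 2 + y 6 2) - (lam * (1 - p) * (x 5 2 + y 5 2) + lam * (1 - p) * (x 6 2 + y 6 2) + lam * (1 - p) * (x 7 2 + y 7 2) + lamE * (x 0 2 + y 0 2) + lamE * (x 1 2 + y 1 2) + lamE * (x 6 2 + y 6 2) + mu3 * (x 6 2 + y 6 2) + mu2 * (x 6 2 + y 6 2)) = ((lam + lamE + mu1 + mu2 + mu3) * x 6 2 - (lam * (1 - p) * x 5 2 + lam * (1 - p) * x 6 2 + lam * (1 - p) * x 7 2 + lamE * x 0 2 + lamE * x 1 2 + lamE * x 6 2 + mu3 * x 6 2 + mu2 * x 6 2)) + ((lam + lamE + mu1 + mu2 + mu3) * y 6 2 - (lam * (1 - p) * y 5 2 + lam * (1 - p) * y 6 2 + lam * (1 - p) * y 7 2 + lamE * y 0 2 + lamE * y 1 2 + lamE * y 6 2 + mu3 * y 6 2 + mu2 * y 6 2))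
      ring
    · show (lam + lamE + mu1 + mu2 + mu3) * (x 6 3 + y 6 3) - (lam * (1 - p) * (x 5 3 + y 5 3) + lam * (1 - p) * (x 6 3 + y 6 3) + lam * (1 - p) * (x 7 3 + y 7 3) + lamE * (x 0 0 + y 0 0) + lamE * (x 1 0 + y 1 0) + lamE * (x 6 0 + y 6 0) + mu3 * (x 6 3 + y 6 3) + mu2 * (x 6 2 + y 6 2)) = ((lam + lamE + mu1 + mu2 + mu3) * x 6 3 - (lam * (1 - p) * x 5 3 + lam * (1 - p) * x 6 3 + lam * (1 - p) * x 7 3 + lamE * x 0 0 + lamE * x 1 0 + lamE * x 6 0 + mu3 * x 6 3 + mu2 * x 6 2)) + ((lam + lamE + mu1 + mu2 + mu3) * y 6 3 - (lam * (1 - p) * y 5 3 + lam * (1 - p) * y 6 3 + lam * (1 - p) * y 7 3 + lamE * y 0 0 + lamE * y 1 0 + lamE * y 6 0 + mu3 * y 6 3 + mu2 * y 6 2))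
      ring
    · show (lam + lamE + mu1 + mu2 + mu3) * (x 7 0 + y 7 0) - (lam * p * (x 6 0 + y 6 0) + lamE * (x 2 0 + y 2 0) + lamE * (x 7 0 + y 7 0) + mu2 * (x 7 2 + y 7 2) + mu3 * (x 7 3 + y 7 3) + lam * p * (x 7 0 + y 7 0)) = ((lam + lamE + mu1 + mu2 + mu3) * x 7 0 - (lam * p * x 6 0 + lamE * x 2 0 + lamE * x 7 0 + mu2 * x 7 2 + mu3 * x 7 3 + lam * p * x 7 0)) + ((lam + lamE + mu1 + mu2 + mu3) * y 7 0 - (lam * p * y 6 0 + lamE * y 2 0 + lamE * y 7 0 + mu2 * y 7 2 + mu3 * y 7 3 + lam * p * y 7 0))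
      ring
    · show (lam + lamE + mu1 + mu2 + mu3) * (x 7 1 + y 7 1) - (lam * p * (x 6 1 + y 6 1) + lamE * (x 2 1 + y 2 1) + lamE * (x 7 1 + y 7 1) + mu2 * (x 7 2 + y 7 2) + mu3 * (x 7 1 + y 7 1) + lam * p * (x 7 1 + y 7 1)) = ((lam + lamE + mu1 + mu2 + mu3) * x 7 1 - (lam * p * x 6 1 + lamE * x 2 1 + lamE * x 7 1 + mu2 * x 7 2 + mu3 * x 7 1 + lam * p * x 7 1)) + ((lam + lamE + mu1 + mu2 + mu3) * y 7 1 - (lam * p * y 6 1 + lamE * y 2 1 + lamE * y 7 1 + mu2 * y 7 2 + mu3 * y 7 1 + lam * p * y 7 1))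
      ring
    · show (lam + lamE + mu1 + mu2 + mu3) * (x 7 2 + y 7 2) - (lamE * (x 2 2 + y 2 2) + lamE * (x 7 2 + y 7 2) + mu2 * (x 7 2 + y 7 2) + mu3 * (x 7 2 + y 7 2)) = ((lam + lamE + mu1 + mu2 + mu3) * x 7 2 - (lamE * x 2 2 + lamE * x 7 2 + mu2 * x 7 2 + mu3 * x 7 2)) + ((lam + lamE + mu1 + mu2 + mu3) * y 7 2 - (lamE * y 2 2 + lamE * y 7 2 + mu2 * y 7 2 + mu3 * y 7 2))
      ring
    · show (lam + lamE + mu1 + mu2 + mu3) * (x 7 3 + y 7 3) - (lam * p * (x 6 3 + y 6 3) + lamE * (x 2 0 + y 2 0) + lamE * (x 7 0 + y 7 0) + mu2 * (x 7 2 + y 7 2) + mu3 * (x 7 3 + y 7 3) + lam * p * (x 7 3 + y 7 3)) = ((lam + lamE + mu1 + mu2 + mu3) * x 7 3 - (lam * p * x 6 3 + lamE * x 2 0 + lamE * x 7 0 + mu2 * x 7 2 + mu3 * x 7 3 + lam * p * x 7 3)) + ((lam + lamE + mu1 + mu2 + mu3) * y 7 3 - (lam * p * y 6 3 + lamE * y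 2 0 + lamE * y 7 0 + mu2 * y 7 2 + mu3 * y 7 3 + lam * p * y 7 3))
      ring
  · intro c x
    funext s k
    rcases fin8c s with rfl|rfl|rfl|rfl|rfl|rfl|rfl|rfl <;> rcases fin4c k with rfl|rfl|rfl|rfl
    · show (lam + lamE + mu1 + mu2 + mu3) * (c * x 0 0) - (lam * (1 - p) * (c * x 0 0) + mu2 * (c * x 0 2) + mu3 * (c * x 0 3) + lam * (1 - p) * (c * x 2 0) + lam * (1 - p) * (c * x 3 0)) = c * ((lam + lamE + mu1 + mu2 + mu3) * x 0 0 - (lam * (1 - p) * x 0 0 + mu2 * x 0 2 + mu3 * x 0 3 + lam * (1 - p) * x 2 0 + lam * (1 - p) * x 3 0))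
      ring
    · show (lam + lamE + mu1 + mu2 + mu3) * (c * x 0 1) - (mu2 * (c * x 0 1) + mu3 * (c * x 0 1)) = c * ((lam + lamE + mu1 + mu2 + mu3) * x 0 1 - (mu2 * x 0 1 + mu3 * x 0 1))
      ring
    · show (lam + lamE + mu1 + mu2 + mu3) * (c * x 0 2) - (lam * (1 - p) * (c * x 0 2) + mu2 * (c * x 0 2) + mu3 * (c * x 0 2) + lam * (1 - p) * (c * x 2 2) + lam * (1 - p) * (c * x 3 2)) = c * ((lam + lamE + mu1 + mu2 + mu3) * x 0 2 - (lam * (1 - p) * x 0 2 + mu2 * x 0 2 + mu3 * x 0 2 + lam * (1 - p) * x 2 2 + lam * (1 - p) * x 3 2))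
      ring
    · show (lam + lamE + mu1 + mu2 + mu3) * (c * x 0 3) - (lam * (1 - p) * (c * x 0 3) + mu2 * (c * x 0 2) + mu3 * (c * x 0 3) + lam * (1 - p) * (c * x 2 3) + lam * (1 - p) * (c * x 3 3)) = c * ((lam + lamE + mu1 + mu2 + mu3) * x 0 3 - (lam * (1 - p) * x 0 3 + mu2 * x 0 2 + mu3 * x 0 3 + lam * (1 - p) * x 2 3 + lam * (1 - p) * x 3 3))
      ring
    · show (lam + lamE + mu1 + mu2 + mu3) * (c * x 1 0) - (lam * (1 - p) * (c * x 1 0) + mu2 * (c * x 1 2) + mu3 * (c * x 1 3) + lam * (1 - p) * (c * x 4 0)) = c * ((lam + lamE + mu1 + mu2 + mu3) * x 1 0 - (lam * (1 - p) * x 1 0 + mu2 * x 1 2 + mu3 * x 1 3 + lam * (1 - p) * x 4 0))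
      ring
    · show (lam + lamE + mu1 + mu2 + mu3) * (c * x 1 1) - (mu2 * (c * x 1 1) + mu3 * (c * x 1 1)) = c * ((lam + lamE + mu1 + mu2 + mu3) * x 1 1 - (mu2 * x 1 1 + mu3 * x 1 1))
      ring
    · show (lam + lamE + mu1 + mu2 + mu3) * (c * x 1 2) - (lam * (1 - p) * (c * x 1 2) + mu2 * (c * x 1 2) + mu3 * (c * x 1 3) + lam * (1 - p) * (c * x 4 2)) = c * ((lam + lamE + mu1 + mu2 + mu3) * x 1 2 - (lam * (1 - p) * x 1 2 + mu2 * x 1 2 + mu3 * x 1 3 + lam * (1 - p) * x 4 2))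
      ring
    · show (lam + lamE + mu1 + mu2 + mu3) * (c * x 1 3) - (lam * (1 - p) * (c * x 1 3) + mu2 * (c * x 1 3) + mu3 * (c * x 1 3) + lam * (1 - p) * (c * x 4 3)) = c * ((lam + lamE + mu1 + mu2 + mu3) * x 1 3 - (lam * (1 - p) * x 1 3 + mu2 * x 1 3 + mu3 * x 1 3 + lam * (1 - p) * x 4 3))
      ring
    · show (lam + lamE + mu1 + mu2 + mu3) * (c * x 2 0) - (lam * p * (c * x 2 0) + mu2 * (c * x 2 2) + mu3 * (c * x 2 3) + lam * p * (c * x 0 0) + lam * p * (c * x 1 0)) = c * ((lam + lamE + mu1 + mu2 + mu3) * x 2 0 - (lam * p * x 2 0 + mu2 * x 2 2 + mu3 * x 2 3 + lam * p * x 0 0 + lam * p * x 1 0))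
      ring
    · show (lam + lamE + mu1 + mu2 + mu3) * (c * x 2 1) - (lam * p * (c * x 2 1) + mu2 * (c * x 2 2) + mu3 * (c * x 2 1) + lam * p * (c * x 0 1) + lam * p * (c * x 1 1)) = c * ((lam + lamE + mu1 + mu2 + mu3) * x 2 1 - (lam * p * x 2 1 + mu2 * x 2 2 + mu3 * x 2 1 + lam * p * x 0 1 + lam * p * x 1 1))
      ring
    · show (lam + lamE + mu1 + mu2 + mu3) * (c * x 2 2) - (mu2 * (c * x 2 2) + mu3 * (c * x 2 2)) = c * ((lam + lamE + mu1 + mu2 + mu3) * x 2 2 - (mu2 * x 2 2 + mu3 * x 2 2))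
      ring
    · show (lam + lamE + mu1 + mu2 + mu3) * (c * x 2 3) - (lam * p * (c * x 2 3) + mu2 * (c * x 2 2) + mu3 * (c * x 2 3) + lam * p * (c * x 0 3) + lam * p * (c * x 1 3)) = c * ((lam + lamE + mu1 + mu2 + mu3) * x 2 3 - (lam * p * x 2 3 + mu2 * x 2 2 + mu3 * x 2 3 + lam * p * x 0 3 + lam * p * x 1 3))
      ring
    · show (lam + lamE + mu1 + mu2 + mu3 - mu1) * (c * x 3 0) - (lam * p * ((c * x 3 0) + (c * x 4 0)) + mu2 * (c * x 3 2) + mu3 * (c * x 3 3) + mu1 * ((c * x 2 0) + (c * x 7 0))) = c * ((lam + lamE + mu1 + mu2 + mu3 - mu1) * x 3 0 - (lam * p * (x 3 0 + x 4 0) + mu2 * x 3 2 + mu3 * x 3 3 + mu1 * (x 2 0 + x 7 0)))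
      ring
    · show (lam + lamE + mu1 + mu2 + mu3 - mu1) * (c * x 3 1) - (0) = c * ((lam + lamE + mu1 + mu2 + mu3 - mu1) * x 3 1 - (0))
      ring
    · show (lam + lamE + mu1 + mu2 + mu3 - mu1) * (c * x 3 2) - (mu2 * (c * x 3 2) + mu3 * (c * x 3 2) + mu1 * ((c * x 2 2) + (c * x 7 2))) = c * ((lam + lamE + mu1 + mu2 + mu3 - mu1) * x 3 2 - (mu2 * x 3 2 + mu3 * x 3 2 + mu1 * (x 2 2 + x 7 2)))
      ring
    · show (lam + lamE + mu1 + mu2 + mu3 - mu1) * (c * x 3 3) - (lam * p * ((c * x 3 3) + (c * x 4 3)) + mu2 * (c * x 3 2) + mu3 * (c * x 3 3) + mu1 * ((c * x 2 1) + (c * x 7 1))) = c * ((lam + lamE + mu1 + mu2 + mu3 - mu1) * x 3 3 - (lam * p * (x 3 3 + x 4 3) + mu2 * x 3 2 + mu3 * x 3 3 + mu1 * (x 2 1 + x 7 1)))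
      ring
    · show (lam + lamE + mu1 + mu2 + mu3 - mu1) * (c * x 4 0) - (mu1 * (c * x 6 0) + mu2 * (c * x 4 2) + mu3 * (c * x 4 3) + mu1 * (c * x 0 0) + mu1 * (c * x 1 0)) = c * ((lam + lamE + mu1 + mu2 + mu3 - mu1) * x 4 0 - (mu1 * x 6 0 + mu2 * x 4 2 + mu3 * x 4 3 + mu1 * x 0 0 + mu1 * x 1 0))
      ring
    · show (lam + lamE + mu1 + mu2 + mu3 - mu1) * (c * x 4 1) - (0) = c * ((lam + lamE + mu1 + mu2 + mu3 - mu1) * x 4 1 - (0))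
      ring
    · show (lam + lamE + mu1 + mu2 + mu3 - mu1) * (c * x 4 2) - (mu1 * (c * x 6 2) + mu2 * (c * x 4 2) + mu3 * (c * x 4 3) + mu1 * (c * x 0 2) + mu1 * (c * x 1 2)) = c * ((lam + lamE + mu1 + mu2 + mu3 - mu1) * x 4 2 - (mu1 * x 6 2 + mu2 * x 4 2 + mu3 * x 4 3 + mu1 * x 0 2 + mu1 * x 1 2))
      ring
    · show (lam + lamE + mu1 + mu2 + mu3 - mu1) * (c * x 4 3) - (mu1 * (c * x 6 1) + mu2 * (c * x 4 3) + mu3 * (c * x 4 3) + mu1 * (c * x 0 1) + mu1 * (c * x 1 1)) = c * ((lam + lamE + mu1 + mu2 + mu3 - mu1) * x 4 3 - (mu1 * x 6 1 + mu2 * x 4 3 + mu3 * x 4 3 + mu1 * x 0 1 + mu1 * x 1 1))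
      ring
    · show (lam + lamE + mu1 + mu2 + mu3 - mu1) * (c * x 5 0) - (lam * p * (c * x 5 0) + lamE * ((c * x 3 0) + (c * x 4 0) + (c * x 5 0)) + mu2 * (c * x 5 2) + mu3 * (c * x 5 3)) = c * ((lam + lamE + mu1 + mu2 + mu3 - mu1) * x 5 0 - (lam * p * x 5 0 + lamE * (x 3 0 + x 4 0 + x 5 0) + mu2 * x 5 2 + mu3 * x 5 3))
      ring
    · show (lam + lamE + mu1 + mu2 + mu3 - mu1) * (c * x 5 1) - (0) = c * ((lam + lamE + mu1 + mu2 + mu3 - mu1) * x 5 1 - (0))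
      ring
    · show (lam + lamE + mu1 + mu2 + mu3 - mu1) * (c * x 5 2) - (lamE * ((c * x 3 2) + (c * x 4 2) + (c * x 5 2)) + mu2 * (c * x 5 2) + mu3 * (c * x 5 2)) = c * ((lam + lamE + mu1 + mu2 + mu3 - mu1) * x 5 2 - (lamE * (x 3 2 + x 4 2 + x 5 2) + mu2 * x 5 2 + mu3 * x 5 2))
      ring
    · show (lam + lamE + mu1 + mu2 + mu3 - mu1) * (c * x 5 3) - (lam * p * (c * x 5 3) + lamE * ((c * x 3 0) + (c * x 4 0) + (c * x 5 0)) + mu2 * (c * x 5 2) + mu3 * (c * x 5 3)) = c * ((lam + lamE + mu1 + mu2 + mu3 - mu1) * x 5 3 - (lam * p * x 5 3 + lamE * (x 3 0 + x 4 0 + x 5 0) + mu2 * x 5 2 + mu3 * x 5 3))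
      ring
    · show (lam + lamE + mu1 + mu2 + mu3) * (c * x 6 0) - (lam * (1 - p) * (c * x 5 0) + lam * (1 - p) * (c * x 6 0) + lam * (1 - p) * (c * x 7 0) + lamE * (c * x 0 0) + lamE * (c * x 1 0) + lamE * (c * x 6 0) + mu3 * (c * x 6 3) + mu2 * (c * x 6 2)) = c * ((lam + lamE + mu1 + mu2 + mu3) * x 6 0 - (lam * (1 - p) * x 5 0 + lam * (1 - p) * x 6 0 + lam * (1 - p) * x 7 0 + lamE * x 0 0 + lamE * x 1 0 + lamE * x 6 0 + mu3 * x 6 3 + mu2 * x 6 2))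
      ring
    · show (lam + lamE + mu1 + mu2 + mu3) * (c * x 6 1) - (lamE * (c * x 0 1) + lamE * (c * x 1 1) + lamE * (c * x 6 1) + mu3 * (c * x 6 1) + mu2 * (c * x 6 1)) = c * ((lam + lamE + mu1 + mu2 + mu3) * x 6 1 - (lamE * x 0 1 + lamE * x 1 1 + lamE * x 6 1 + mu3 * x 6 1 + mu2 * x 6 1))
      ring
    · show (lam + lamE + mu1 + mu2 + mu3) * (c * x 6 2) - (lam * (1 - p) * (c * x 5 2) + lam * (1 - p) * (c * x 6 2) + lam * (1 - p) * (c * x 7 2) + lamE * (c * x 0 2) + lamE * (c * x 1 2) + lamE * (c * x 6 2) + mu3 * (c * x 6 2) + mu2 * (c * x 6 2)) = c * ((lam + lamE + mu1 + mu2 + mu3) * x 6 2 - (lam * (1 - p) * x 5 2 + lam * (1 - p) * x 6 2 + lam * (1 - p) * x 7 2 + lamE * x 0 2 + lamE * x 1 2 + lamE * x 6 2 + mu3 * x 6 2 + mu2 * x 6 2))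
      ring
    · show (lam + lamE + mu1 + mu2 + mu3) * (c * x 6 3) - (lam * (1 - p) * (c * x 5 3) + lam * (1 - p) * (c * x 6 3) + lam * (1 - p) * (c * x 7 3) + lamE * (c * x 0 0) + lamE * (c * x 1 0) + lamE * (c * x 6 0) + mu3 * (c * x 6 3) + mu2 * (c * x 6 2)) = c * ((lam + lamE + mu1 + mu2 + mu3) * x 6 3 - (lam * (1 - p) * x 5 3 + lam * (1 - p) * x 6 3 + lam * (1 - p) * x 7 3 + lamE * x 0 0 + lamE * x 1 0 + lamE * x 6 0 + mu3 * x 6 3 + mu2 * x 6 2))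
      ring
    · show (lam + lamE + mu1 + mu2 + mu3) * (c * x 7 0) - (lam * p * (c * x 6 0) + lamE * (c * x 2 0) + lamE * (c * x 7 0) + mu2 * (c * x 7 2) + mu3 * (c * x 7 3) + lam * p * (c * x 7 0)) = c * ((lam + lamE + mu1 + mu2 + mu3) * x 7 0 - (lam * p * x 6 0 + lamE * x 2 0 + lamE * x 7 0 + mu2 * x 7 2 + mu3 * x 7 3 + lam * p * x 7 0))
      ring
    · show (lam + lamE + mu1 + mu2 + mu3) * (c * x 7 1) - (lam * p * (c * x 6 1) + lamE * (c * x 2 1) + lamE * (c * x 7 1) + mu2 * (c * x 7 2) + mu3 * (c * x 7 1) + lam * p * (c * x 7 1)) = c * ((lam + lamE + mu1 + mu2 + mu3) * x 7 1 - (lam * p * x 6 1 + lamE * x 2 1 + lamE * x 7 1 + mu2 * x 7 2 + mu3 * x 7 1 + lam * p * x 7 1))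
      ring
    · show (lam + lamE + mu1 + mu2 + mu3) * (c * x 7 2) - (lamE * (c * x 2 2) + lamE * (c * x 7 2) + mu2 * (c * x 7 2) + mu3 * (c * x 7 2)) = c * ((lam + lamE + mu1 + mu2 + mu3) * x 7 2 - (lamE * x 2 2 + lamE * x 7 2 + mu2 * x 7 2 + mu3 * x 7 2))
      ring
    · show (lam + lamE + mu1 + mu2 + mu3) * (c * x 7 3) - (lam * p * (c * x 6 3) + lamE * (c * x 2 0) + lamE * (c * x 7 0) + mu2 * (c * x 7 2) + mu3 * (c * x 7 3) + lam * p * (c * x 7 3)) = c * ((lam + lamE + mu1 + mu2 + mu3) * x 7 3 - (lam * p * x 6 3 + lamE * x 2 0 + lamE * x 7 0 + mu2 * x 7 2 + mu3 * x 7 3 + lam * p * x 7 3))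
      ring

private lemma aux11le (q r e mu1 mu2 mu3 : ℝ) (hq : 0 < q) (hr : 0 < r) (he : 0 < e)
    (hm1 : 0 < mu1) (hm2 : 0 < mu2) (hm3 : 0 < mu3)
    (d0 d1 d2 d3 d4 d5 d6 d7 : ℝ) (hd0 : 0 < d0) (hd1 : 0 < d1) (hd2 : 0 < d2)
    (hd3 : 0 < d3) (hd4 : 0 < d4) (hd5 : 0 < d5) (hd6 : 0 < d6) (hd7 : 0 < d7)
    (x0 x1 x2 x3 x4 x5 x6 x7 x8 x9 x10 : ℝ)
    (I1 : r * (d2 + d3) < (q + e + mu1 + mu2 + mu3) * d0)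
    (I2 : r * d4 < (q + e + mu1 + mu2 + mu3) * d1)
    (I3 : q * (d0 + d1) < (r + e + mu1 + mu2 + mu3) * d2)
    (I4 : q * d4 + mu1 * (d2 + d7) < (r + e + mu2 + mu3) * d3)
    (I5 : mu1 * (d6 + d0 + d1) < (q + r + e + mu2 + mu3) * d4)
    (I6 : e * (d3 + d4) + mu3 * d5 < (r + mu2 + mu3) * d5)
    (I7 : r * (d5 + d7) + e * (d0 + d1) + mu3 * d6 < (q + mu1 + mu2 + mu3) * d6)
    (I8 : q * d6 + e * d2 + mu3 * d7 < (r + mu1 + mu2 + mu3) * d7)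
    (I9 : e * (d3 + d4 + d5) < (r + e + mu2) * d5)
    (I10 : r * (d5 + d7) + e * (d0 + d1 + d6) < (q + e + mu1 + mu2) * d6)
    (I11 : q * d6 + e * (d2 + d7) < (r + e + mu1 + mu2) * d7)
    (E1 : (q + e + mu1 + mu2 + mu3) * x0 = r * (x2 + x3))
    (E2 : (q + e + mu1 + mu2 + mu3) * x1 = r * x4)
    (E3 : (r + e + mu1 + mu2 + mu3) * x2 = q * (x0 + x1))
    (E4 : (r + e + mu2 + mu3) * x3 = q * x4 + mu1 * (x2 + x7))
    (E5 : (q + r + e + mu2 + mu3) * x4 = mu1 * (x6 + x0 + x1))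
    (E6 : (r + mu2 + mu3) * x5 = e * (x3 + x4) + mu3 * x8)
    (E7 : (q + mu1 + mu2 + mu3) * x6 = r * (x5 + x7) + e * (x0 + x1) + mu3 * x9)
    (E8 : (r + mu1 + mu2 + mu3) * x7 = q * x6 + e * x2 + mu3 * x10)
    (E9 : (r + e + mu2) * x8 = e * (x3 + x4 + x5))
    (E10 : (q + e + mu1 + mu2) * x9 = r * (x8 + x10) + e * (x0 + x1 + x6))
    (E11 : (r + e + mu1 + mu2) * x10 = q * x9 + e * (x2 + x7)) :
    x0 ≤ 0 ∧ x1 ≤ 0 ∧ x2 ≤ 0 ∧ x3 ≤ 0 ∧ x4 ≤ 0 ∧ x5 ≤ 0 ∧ x6 ≤ 0 ∧ x7 ≤ 0 ∧ x8 ≤ 0 ∧ x9 ≤ 0 ∧ x10 ≤ 0 := by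
  obtain ⟨t, hb0, hb1, hb2, hb3, hb4, hb5, hb6, hb7, hb8, hb9, hb10, hat⟩ :
      ∃ t : ℝ, x0 ≤ t * d0 ∧ x1 ≤ t * d1 ∧ x2 ≤ t * d2 ∧ x3 ≤ t * d3 ∧ x4 ≤ t * d4 ∧ x5 ≤ t * d5 ∧ x6 ≤ t * d6 ∧ x7 ≤ t * d7 ∧ x8 ≤ t * d5 ∧ x9 ≤ t * d6 ∧ x10 ≤ t * d7 ∧
        (x0 = t * d0 ∨ x1 = t * d1 ∨ x2 = t * d2 ∨ x3 = t * d3 ∨ x4 = t * d4 ∨ x5 = t * d5 ∨ x6 = t * d6 ∨ x7 = t * d7 ∨ x8 = t * d5 ∨ x9 = t * d6 ∨ x10 = t * d7) := by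
    obtain ⟨i0, -, hmax⟩ := Finset.exists_max_image (Finset.univ : Finset (Fin 11))
      ![x0 / d0, x1 / d1, x2 / d2, x3 / d3, x4 / d4, x5 / d5, x6 / d6, x7 / d7, x8 / d5, x9 / d6, x10 / d7] ⟨0, Finset.mem_univ 0⟩
    refine ⟨![x0 / d0, x1 / d1, x2 / d2, x3 / d3, x4 / d4, x5 / d5, x6 / d6, x7 / d7, x8 / d5, x9 / d6, x10 / d7] i0, ?_, ?_, ?_, ?_, ?_, ?_, ?_, ?_, ?_, ?_, ?_, ?_⟩
    · exact (div_le_iff₀ (show (0:ℝ) < d0 by linarith)).mp (hmax 0 (Finset.mem_univ _))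
    · exact (div_le_iff₀ (show (0:ℝ) < d1 by linarith)).mp (hmax 1 (Finset.mem_univ _))
    · exact (div_le_iff₀ (show (0:ℝ) < d2 by linarith)).mp (hmax 2 (Finset.mem_univ _))
    · exact (div_le_iff₀ (show (0:ℝ) < d3 by linarith)).mp (hmax 3 (Finset.mem_univ _))
    · exact (div_le_iff₀ (show (0:ℝ) < d4 by linarith)).mp (hmax 4 (Finset.mem_univ _))
    · exact (div_le_iff₀ (show (0:ℝ) < d5 by linarith)).mp (hmax 5 (Finset.mem_univ _))
    · exact (div_le_iff₀ (show (0:ℝ) < d6 by linarith)).mp (hmax 6 (Finset.mem_univ _))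
    · exact (div_le_iff₀ (show (0:ℝ) < d7 by linarith)).mp (hmax 7 (Finset.mem_univ _))
    · exact (div_le_iff₀ (show (0:ℝ) < d5 by linarith)).mp (hmax 8 (Finset.mem_univ _))
    · exact (div_le_iff₀ (show (0:ℝ) < d6 by linarith)).mp (hmax 9 (Finset.mem_univ _))
    · exact (div_le_iff₀ (show (0:ℝ) < d7 by linarith)).mp (hmax 10 (Finset.mem_univ _))
    · rcases fin11c i0 with rfl|rfl|rfl|rfl|rfl|rfl|rfl|rfl|rfl|rfl|rfl
      · exact Or.inl ((div_mul_cancel₀ x0 (show (0:ℝ) < d0 by linarith).ne').symm)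
      · exact Or.inr (Or.inl ((div_mul_cancel₀ x1 (show (0:ℝ) < d1 by linarith).ne').symm))
      · exact Or.inr (Or.inr (Or.inl ((div_mul_cancel₀ x2 (show (0:ℝ) < d2 by linarith).ne').symm)))
      · exact Or.inr (Or.inr (Or.inr (Or.inl ((div_mul_cancel₀ x3 (show (0:ℝ) < d3 by linarith).ne').symm))))
      · exact Or.inr (Or.inr (Or.inr (Or.inr (Or.inl ((div_mul_cancel₀ x4 (show (0:ℝ) < d4 by linarith).ne').symm)))))
      · exact Or.inr (Or.inr (Or.inr (Or.inr (Or.inr (Or.inl ((div_mul_cancel₀ x5 (show (0:ℝ) < d5 by linarith).ne').symm))))))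
      · exact Or.inr (Or.inr (Or.inr (Or.inr (Or.inr (Or.inr (Or.inl ((div_mul_cancel₀ x6 (show (0:ℝ) < d6 by linarith).ne').symm)))))))
      · exact Or.inr (Or.inr (Or.inr (Or.inr (Or.inr (Or.inr (Or.inr (Or.inl ((div_mul_cancel₀ x7 (show (0:ℝ) < d7 by linarith).ne').symm))))))))
      · exact Or.inr (Or.inr (Or.inr (Or.inr (Or.inr (Or.inr (Or.inr (Or.inr (Or.inl ((div_mul_cancel₀ x8 (show (0:ℝ) < d5 by linarith).ne').symm)))))))))
      · exact Or.inr (Or.inr (Or.inr (Or.inr (Or.inr (Or.inr (Or.inr (Or.inr (Or.inr (Or.inl ((div_mul_cancel₀ x9 (show (0:ℝ) < d6 by linarith).ne').symm))))))))))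
      · exact Or.inr (Or.inr (Or.inr (Or.inr (Or.inr (Or.inr (Or.inr (Or.inr (Or.inr (Or.inr ((div_mul_cancel₀ x10 (show (0:ℝ) < d7 by linarith).ne').symm))))))))))
  have hT : t ≤ 0 := by
    by_contra hT
    push_neg at hT
    rcases hat with hx|hx|hx|hx|hx|hx|hx|hx|hx|hx|hx
    · linarith [E1, mul_lt_mul_of_pos_left I1 hT, mul_le_mul_of_nonneg_left hx.le (show (0:ℝ) ≤ (q + e + mu1 + mu2 + mu3) by linarith), mul_le_mul_of_nonneg_left hx.ge (show (0:ℝ) ≤ (q + e + mu1 + mu2 + mu3) by linarith), mul_le_mul_of_nonneg_left hb2 hr.le, mul_le_mul_of_nonneg_left hb3 hr.le]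
    · linarith [E2, mul_lt_mul_of_pos_left I2 hT, mul_le_mul_of_nonneg_left hx.le (show (0:ℝ) ≤ (q + e + mu1 + mu2 + mu3) by linarith), mul_le_mul_of_nonneg_left hx.ge (show (0:ℝ) ≤ (q + e + mu1 + mu2 + mu3) by linarith), mul_le_mul_of_nonneg_left hb4 hr.le]
    · linarith [E3, mul_lt_mul_of_pos_left I3 hT, mul_le_mul_of_nonneg_left hx.le (show (0:ℝ) ≤ (r + e + mu1 + mu2 + mu3) by linarith), mul_le_mul_of_nonneg_left hx.ge (show (0:ℝ) ≤ (r + e + mu1 + mu2 + mu3) by linarith), mul_le_mul_of_nonneg_left hb0 hq.le, mul_le_mul_of_nonneg_left hb1 hq.le]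
    · linarith [E4, mul_lt_mul_of_pos_left I4 hT, mul_le_mul_of_nonneg_left hx.le (show (0:ℝ) ≤ (r + e + mu2 + mu3) by linarith), mul_le_mul_of_nonneg_left hx.ge (show (0:ℝ) ≤ (r + e + mu2 + mu3) by linarith), mul_le_mul_of_nonneg_left hb4 hq.le, mul_le_mul_of_nonneg_left hb2 hm1.le, mul_le_mul_of_nonneg_left hb7 hm1.le]
    · linarith [E5, mul_lt_mul_of_pos_left I5 hT, mul_le_mul_of_nonneg_left hx.le (show (0:ℝ) ≤ (q + r + e + mu2 + mu3) by linarith), mul_le_mul_of_nonneg_left hx.ge (show (0:ℝ) ≤ (q + r + e + mu2 + mu3) by linarith), mul_le_mul_of_nonneg_left hb6 hm1.le, mul_le_mul_of_nonneg_left hb0 hm1.le, mul_le_mul_of_nonneg_left hb1 hm1.le]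
    · linarith [E6, mul_lt_mul_of_pos_left I6 hT, mul_le_mul_of_nonneg_left hx.le (show (0:ℝ) ≤ (r + mu2 + mu3) by linarith), mul_le_mul_of_nonneg_left hx.ge (show (0:ℝ) ≤ (r + mu2 + mu3) by linarith), mul_le_mul_of_nonneg_left hb3 he.le, mul_le_mul_of_nonneg_left hb4 he.le, mul_le_mul_of_nonneg_left hb8 hm3.le]
    · linarith [E7, mul_lt_mul_of_pos_left I7 hT, mul_le_mul_of_nonneg_left hx.le (show (0:ℝ) ≤ (q + mu1 + mu2 + mu3) by linarith), mul_le_mul_of_nonneg_left hx.ge (show (0:ℝ) ≤ (q + mu1 + mu2 + mu3) by linarith), mul_le_mul_of_nonneg_left hb5 hr.le, mul_le_mul_of_nonneg_left hb7 hr.le, mul_le_mul_of_nonneg_left hb0 he.le, mul_le_mul_of_nonneg_left hb1 he.le, mul_le_mul_of_nonneg_left hb9 hm3.le]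
    · linarith [E8, mul_lt_mul_of_pos_left I8 hT, mul_le_mul_of_nonneg_left hx.le (show (0:ℝ) ≤ (r + mu1 + mu2 + mu3) by linarith), mul_le_mul_of_nonneg_left hx.ge (show (0:ℝ) ≤ (r + mu1 + mu2 + mu3) by linarith), mul_le_mul_of_nonneg_left hb6 hq.le, mul_le_mul_of_nonneg_left hb2 he.le, mul_le_mul_of_nonneg_left hb10 hm3.le]
    · linarith [E9, mul_lt_mul_of_pos_left I9 hT, mul_le_mul_of_nonneg_left hx.le (show (0:ℝ) ≤ (r + e + mu2) by linarith), mul_le_mul_of_nonneg_left hx.ge (show (0:ℝ) ≤ (r + e + mu2) by linarith), mul_le_mul_of_nonneg_left hb3 he.le, mul_le_mul_of_nonneg_left hb4 he.le, mul_le_mul_of_nonneg_left hb5 he.le]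
    · linarith [E10, mul_lt_mul_of_pos_left I10 hT, mul_le_mul_of_nonneg_left hx.le (show (0:ℝ) ≤ (q + e + mu1 + mu2) by linarith), mul_le_mul_of_nonneg_left hx.ge (show (0:ℝ) ≤ (q + e + mu1 + mu2) by linarith), mul_le_mul_of_nonneg_left hb8 hr.le, mul_le_mul_of_nonneg_left hb10 hr.le, mul_le_mul_of_nonneg_left hb0 he.le, mul_le_mul_of_nonneg_left hb1 he.le, mul_le_mul_of_nonneg_left hb6 he.le]
    · linarith [E11, mul_lt_mul_of_pos_left I11 hT, mul_le_mul_of_nonneg_left hx.le (show (0:ℝ) ≤ (r + e + mu1 + mu2) by linarith), mul_le_mul_of_nonneg_left hx.ge (show (0:ℝ) ≤ (r + e + mu1 + mu2) by linarith), mul_le_mul_of_nonneg_left hb9 hq.le, mul_le_mul_of_nonneg_left hb2 he.le, mul_le_mul_of_nonneg_left hb7 he.le]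
  refine ⟨?_, ?_, ?_, ?_, ?_, ?_, ?_, ?_, ?_, ?_, ?_⟩
  · linarith [hb0, mul_nonneg (neg_nonneg.mpr hT) (show (0:ℝ) ≤ d0 by linarith)]
  · linarith [hb1, mul_nonneg (neg_nonneg.mpr hT) (show (0:ℝ) ≤ d1 by linarith)]
  · linarith [hb2, mul_nonneg (neg_nonneg.mpr hT) (show (0:ℝ) ≤ d2 by linarith)]
  · linarith [hb3, mul_nonneg (neg_nonneg.mpr hT) (show (0:ℝ) ≤ d3 by linarith)]
  · linarith [hb4, mul_nonneg (neg_nonneg.mpr hT) (show (0:ℝ) ≤ d4 by linarith)]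
  · linarith [hb5, mul_nonneg (neg_nonneg.mpr hT) (show (0:ℝ) ≤ d5 by linarith)]
  · linarith [hb6, mul_nonneg (neg_nonneg.mpr hT) (show (0:ℝ) ≤ d6 by linarith)]
  · linarith [hb7, mul_nonneg (neg_nonneg.mpr hT) (show (0:ℝ) ≤ d7 by linarith)]
  · linarith [hb8, mul_nonneg (neg_nonneg.mpr hT) (show (0:ℝ) ≤ d5 by linarith)]
  · linarith [hb9, mul_nonneg (neg_nonneg.mpr hT) (show (0:ℝ) ≤ d6 by linarith)]
  · linarith [hb10, mul_nonneg (neg_nonneg.mpr hT) (show (0:ℝ) ≤ d7 by linarith)]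

private lemma aux11eq (q r e mu1 mu2 mu3 : ℝ) (hq : 0 < q) (hr : 0 < r) (he : 0 < e)
    (hm1 : 0 < mu1) (hm2 : 0 < mu2) (hm3 : 0 < mu3)
    (d0 d1 d2 d3 d4 d5 d6 d7 : ℝ) (hd0 : 0 < d0) (hd1 : 0 < d1) (hd2 : 0 < d2)
    (hd3 : 0 < d3) (hd4 : 0 < d4) (hd5 : 0 < d5) (hd6 : 0 < d6) (hd7 : 0 < d7)
    (x0 x1 x2 x3 x4 x5 x6 x7 x8 x9 x10 : ℝ)
    (I1 : r * (d2 + d3) < (q + e + mu1 + mu2 + mu3) * d0)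
    (I2 : r * d4 < (q + e + mu1 + mu2 + mu3) * d1)
    (I3 : q * (d0 + d1) < (r + e + mu1 + mu2 + mu3) * d2)
    (I4 : q * d4 + mu1 * (d2 + d7) < (r + e + mu2 + mu3) * d3)
    (I5 : mu1 * (d6 + d0 + d1) < (q + r + e + mu2 + mu3) * d4)
    (I6 : e * (d3 + d4) + mu3 * d5 < (r + mu2 + mu3) * d5)
    (I7 : r * (d5 + d7) + e * (d0 + d1) + mu3 * d6 < (q + mu1 + mu2 + mu3) * d6)
    (I8 : q * d6 + e * d2 + mu3 * d7 < (r + mu1 + mu2 + mu3) * d7)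
    (I9 : e * (d3 + d4 + d5) < (r + e + mu2) * d5)
    (I10 : r * (d5 + d7) + e * (d0 + d1 + d6) < (q + e + mu1 + mu2) * d6)
    (I11 : q * d6 + e * (d2 + d7) < (r + e + mu1 + mu2) * d7)
    (E1 : (q + e + mu1 + mu2 + mu3) * x0 = r * (x2 + x3))
    (E2 : (q + e + mu1 + mu2 + mu3) * x1 = r * x4)
    (E3 : (r + e + mu1 + mu2 + mu3) * x2 = q * (x0 + x1))
    (E4 : (r + e + mu2 + mu3) * x3 = q * x4 + mu1 * (x2 + x7))
    (E5 : (q + r + e + mu2 + mu3) * x4 = mu1 * (x6 + x0 + x1))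
    (E6 : (r + mu2 + mu3) * x5 = e * (x3 + x4) + mu3 * x8)
    (E7 : (q + mu1 + mu2 + mu3) * x6 = r * (x5 + x7) + e * (x0 + x1) + mu3 * x9)
    (E8 : (r + mu1 + mu2 + mu3) * x7 = q * x6 + e * x2 + mu3 * x10)
    (E9 : (r + e + mu2) * x8 = e * (x3 + x4 + x5))
    (E10 : (q + e + mu1 + mu2) * x9 = r * (x8 + x10) + e * (x0 + x1 + x6))
    (E11 : (r + e + mu1 + mu2) * x10 = q * x9 + e * (x2 + x7)) :
    x0 = 0 ∧ x1 = 0 ∧ x2 = 0 ∧ x3 = 0 ∧ x4 = 0 ∧ x5 = 0 ∧ x6 = 0 ∧ x7 = 0 ∧ x8 = 0 ∧ x9 = 0 ∧ x10 = 0 := by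
  obtain ⟨a0, a1, a2, a3, a4, a5, a6, a7, a8, a9, a10⟩ := aux11le q r e mu1 mu2 mu3 hq hr he hm1 hm2 hm3 d0 d1 d2 d3 d4 d5 d6 d7 hd0 hd1 hd2 hd3 hd4 hd5 hd6 hd7
    x0 x1 x2 x3 x4 x5 x6 x7 x8 x9 x10 I1 I2 I3 I4 I5 I6 I7 I8 I9 I10 I11 E1 E2 E3 E4 E5 E6 E7 E8 E9 E10 E11
  obtain ⟨b0, b1, b2, b3, b4, b5, b6, b7, b8, b9, b10⟩ := aux11le q r e mu1 mu2 mu3 hq hr he hm1 hm2 hm3 d0 d1 d2 d3 d4 d5 d6 d7 hd0 hd1 hd2 hd3 hd4 hd5 hd6 hd7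
    (-x0) (-x1) (-x2) (-x3) (-x4) (-x5) (-x6) (-x7) (-x8) (-x9) (-x10) I1 I2 I3 I4 I5 I6 I7 I8 I9 I10 I11
    (by linear_combination -E1) (by linear_combination -E2) (by linear_combination -E3) (by linear_combination -E4) (by linear_combination -E5) (by linear_combination -E6) (by linear_combination -E7) (by linear_combination -E8) (by linear_combination -E9) (by linear_combination -E10) (by linear_combination -E11)
  exact ⟨le_antisymm a0 (by linarith [b0]), le_antisymm a1 (by linarith [b1]), le_antisymm a2 (by linarith [b2]), le_antisymm a3 (by linarith [b3]), le_antisymm a4 (by linarith [b4]), le_antisymm a5 (by linarith [b5]), le_antisymm a6 (by linarith [b6]), le_antisymm a7 (by linarith [b7]), le_antisymm a8 (by linarith [b8]), le_antisymm a9 (by linarith [b9]), le_antisymm a10 (by linarith [b10])⟩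

private lemma homogZero (lam lamE mu1 mu2 mu3 p : ℝ)
    (hlam : 0 < lam) (hlamE : 0 < lamE) (hmu1 : 0 < mu1) (hmu2 : 0 < mu2) (hmu3 : 0 < mu3)
    (hp : 0 < p) (hp1 : p < 1) (π : Fin 8 → ℝ) (hpos : ∀ i : Fin 8, 0 < π i)
    (B0 : (lam + lamE + mu1 + mu2 + mu3) * π 0 = (lam * (1 - p) + mu2 + mu3) * π 0 + lam * (1 - p) * (π 2 + π 3))
    (B1 : (lam + lamE + mu1 + mu2 + mu3) * π 1 = (lam * (1 - p) + mu2 + mu3) * π 1 + lam * (1 - p) * π 4)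
    (B2 : (lam + lamE + mu1 + mu2 + mu3) * π 2 = (lam * p + mu2 + mu3) * π 2 + lam * p * (π 0 + π 1))
    (B3 : (lam + lamE + mu1 + mu2 + mu3 - mu1) * π 3 = (lam * p + mu2 + mu3) * π 3 + lam * p * π 4 + mu1 * (π 2 + π 7))
    (B4 : (lam + lamE + mu1 + mu2 + mu3 - mu1) * π 4 = (mu2 + mu3) * π 4 + mu1 * (π 0 + π 1 + π 6))
    (B5 : (lam + lamE + mu1 + mu2 + mu3 - mu1) * π 5 = (lam * p + lamE + mu2 + mu3) * π 5 + lamE * (π 3 + π 4))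
    (B6 : (lam + lamE + mu1 + mu2 + mu3) * π 6 = (lam * (1 - p) + lamE + mu2 + mu3) * π 6 + lamE * (π 0 + π 1) + lam * (1 - p) * (π 5 + π 7))
    (B7 : (lam + lamE + mu1 + mu2 + mu3) * π 7 = (lam * p + lamE + mu2 + mu3) * π 7 + lamE * π 2 + lam * p * π 6)
    (w : Fin 8 → Fin 4 → ℝ)
    (hw : ∀ (s : Fin 8) (k : Fin 4), aoiDiag lam lamE mu1 mu2 mu3 s * w s k = aoiRHS lam lamE mu1 mu2 mu3 p w s k) :
    w = 0 := by
  have hq : 0 < lam * p := mul_pos hlam hp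
  have hr : 0 < lam * (1 - p) := mul_pos hlam (by linarith)
  have E00 : (lam + lamE + mu1 + mu2 + mu3) * w 0 0 = lam * (1 - p) * w 0 0 + mu2 * w 0 2 + mu3 * w 0 3 + lam * (1 - p) * w 2 0 + lam * (1 - p) * w 3 0 := hw 0 0
  have E01 : (lam + lamE + mu1 + mu2 + mu3) * w 0 1 = mu2 * w 0 1 + mu3 * w 0 1 := hw 0 1
  have E02 : (lam + lamE + mu1 + mu2 + mu3) * w 0 2 = lam * (1 - p) * w 0 2 + mu2 * w 0 2 + mu3 * w 0 2 + lam * (1 - p) * w 2 2 + lam * (1 - p) * w 3 2 := hw 0 2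
  have E03 : (lam + lamE + mu1 + mu2 + mu3) * w 0 3 = lam * (1 - p) * w 0 3 + mu2 * w 0 2 + mu3 * w 0 3 + lam * (1 - p) * w 2 3 + lam * (1 - p) * w 3 3 := hw 0 3
  have E10 : (lam + lamE + mu1 + mu2 + mu3) * w 1 0 = lam * (1 - p) * w 1 0 + mu2 * w 1 2 + mu3 * w 1 3 + lam * (1 - p) * w 4 0 := hw 1 0
  have E11 : (lam + lamE + mu1 + mu2 + mu3) * w 1 1 = mu2 * w 1 1 + mu3 * w 1 1 := hw 1 1
  have E12 : (lam + lamE + mu1 + mu2 + mu3) * w 1 2 = lam * (1 - p) * w 1 2 + mu2 * w 1 2 + mu3 * w 1 3 + lam * (1 - p) * w 4 2 := hw 1 2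
  have E13 : (lam + lamE + mu1 + mu2 + mu3) * w 1 3 = lam * (1 - p) * w 1 3 + mu2 * w 1 3 + mu3 * w 1 3 + lam * (1 - p) * w 4 3 := hw 1 3
  have E20 : (lam + lamE + mu1 + mu2 + mu3) * w 2 0 = lam * p * w 2 0 + mu2 * w 2 2 + mu3 * w 2 3 + lam * p * w 0 0 + lam * p * w 1 0 := hw 2 0
  have E21 : (lam + lamE + mu1 + mu2 + mu3) * w 2 1 = lam * p * w 2 1 + mu2 * w 2 2 + mu3 * w 2 1 + lam * p * w 0 1 + lam * p * w 1 1 := hw 2 1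
  have E22 : (lam + lamE + mu1 + mu2 + mu3) * w 2 2 = mu2 * w 2 2 + mu3 * w 2 2 := hw 2 2
  have E23 : (lam + lamE + mu1 + mu2 + mu3) * w 2 3 = lam * p * w 2 3 + mu2 * w 2 2 + mu3 * w 2 3 + lam * p * w 0 3 + lam * p * w 1 3 := hw 2 3
  have E30 : (lam + lamE + mu1 + mu2 + mu3 - mu1) * w 3 0 = lam * p * (w 3 0 + w 4 0) + mu2 * w 3 2 + mu3 * w 3 3 + mu1 * (w 2 0 + w 7 0) := hw 3 0
  have E31 : (lam + lamE + mu1 + mu2 + mu3 - mu1) * w 3 1 = 0 := hw 3 1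
  have E32 : (lam + lamE + mu1 + mu2 + mu3 - mu1) * w 3 2 = mu2 * w 3 2 + mu3 * w 3 2 + mu1 * (w 2 2 + w 7 2) := hw 3 2
  have E33 : (lam + lamE + mu1 + mu2 + mu3 - mu1) * w 3 3 = lam * p * (w 3 3 + w 4 3) + mu2 * w 3 2 + mu3 * w 3 3 + mu1 * (w 2 1 + w 7 1) := hw 3 3
  have E40 : (lam + lamE + mu1 + mu2 + mu3 - mu1) * w 4 0 = mu1 * w 6 0 + mu2 * w 4 2 + mu3 * w 4 3 + mu1 * w 0 0 + mu1 * w 1 0 := hw 4 0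
  have E41 : (lam + lamE + mu1 + mu2 + mu3 - mu1) * w 4 1 = 0 := hw 4 1
  have E42 : (lam + lamE + mu1 + mu2 + mu3 - mu1) * w 4 2 = mu1 * w 6 2 + mu2 * w 4 2 + mu3 * w 4 3 + mu1 * w 0 2 + mu1 * w 1 2 := hw 4 2
  have E43 : (lam + lamE + mu1 + mu2 + mu3 - mu1) * w 4 3 = mu1 * w 6 1 + mu2 * w 4 3 + mu3 * w 4 3 + mu1 * w 0 1 + mu1 * w 1 1 := hw 4 3
  have E50 : (lam + lamE + mu1 + mu2 + mu3 - mu1) * w 5 0 = lam * p * w 5 0 + lamE * (w 3 0 + w 4 0 + w 5 0) + mu2 * w 5 2 + mu3 * w 5 3 := hw 5 0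
  have E51 : (lam + lamE + mu1 + mu2 + mu3 - mu1) * w 5 1 = 0 := hw 5 1
  have E52 : (lam + lamE + mu1 + mu2 + mu3 - mu1) * w 5 2 = lamE * (w 3 2 + w 4 2 + w 5 2) + mu2 * w 5 2 + mu3 * w 5 2 := hw 5 2
  have E53 : (lam + lamE + mu1 + mu2 + mu3 - mu1) * w 5 3 = lam * p * w 5 3 + lamE * (w 3 0 + w 4 0 + w 5 0) + mu2 * w 5 2 + mu3 * w 5 3 := hw 5 3
  have E60 : (lam + lamE + mu1 + mu2 + mu3) * w 6 0 = lam * (1 - p) * w 5 0 + lam * (1 - p) * w 6 0 + lam * (1 - p) * w 7 0 + lamE * w 0 0 + lamE * w 1 0 + lamE * w 6 0 + mu3 * w 6 3 + mu2 * w 6 2 := hw 6 0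
  have E61 : (lam + lamE + mu1 + mu2 + mu3) * w 6 1 = lamE * w 0 1 + lamE * w 1 1 + lamE * w 6 1 + mu3 * w 6 1 + mu2 * w 6 1 := hw 6 1
  have E62 : (lam + lamE + mu1 + mu2 + mu3) * w 6 2 = lam * (1 - p) * w 5 2 + lam * (1 - p) * w 6 2 + lam * (1 - p) * w 7 2 + lamE * w 0 2 + lamE * w 1 2 + lamE * w 6 2 + mu3 * w 6 2 + mu2 * w 6 2 := hw 6 2
  have E63 : (lam + lamE + mu1 + mu2 + mu3) * w 6 3 = lam * (1 - p) * w 5 3 + lam * (1 - p) * w 6 3 + lam * (1 - p) * w 7 3 + lamE * w 0 0 + lamE * w 1 0 + lamE * w 6 0 + mu3 * w 6 3 + mu2 * w 6 2 := hw 6 3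
  have E70 : (lam + lamE + mu1 + mu2 + mu3) * w 7 0 = lam * p * w 6 0 + lamE * w 2 0 + lamE * w 7 0 + mu2 * w 7 2 + mu3 * w 7 3 + lam * p * w 7 0 := hw 7 0
  have E71 : (lam + lamE + mu1 + mu2 + mu3) * w 7 1 = lam * p * w 6 1 + lamE * w 2 1 + lamE * w 7 1 + mu2 * w 7 2 + mu3 * w 7 1 + lam * p * w 7 1 := hw 7 1
  have E72 : (lam + lamE + mu1 + mu2 + mu3) * w 7 2 = lamE * w 2 2 + lamE * w 7 2 + mu2 * w 7 2 + mu3 * w 7 2 := hw 7 2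
  have E73 : (lam + lamE + mu1 + mu2 + mu3) * w 7 3 = lam * p * w 6 3 + lamE * w 2 0 + lamE * w 7 0 + mu2 * w 7 2 + mu3 * w 7 3 + lam * p * w 7 3 := hw 7 3
  have z01 : w 0 1 = 0 :=
    (mul_eq_zero.mp (show (lam + lamE + mu1) * w 0 1 = 0 by linear_combination E01)).resolve_left
      (show (0:ℝ) < lam + lamE + mu1 by linarith).ne'
  have z11 : w 1 1 = 0 :=
    (mul_eq_zero.mp (show (lam + lamE + mu1) * w 1 1 = 0 by linear_combination E11)).resolve_left
      (show (0:ℝ) < lam + lamE + mu1 by linarith).ne'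
  have z31 : w 3 1 = 0 :=
    (mul_eq_zero.mp (show (lam + lamE + mu2 + mu3) * w 3 1 = 0 by linear_combination E31)).resolve_left
      (show (0:ℝ) < lam + lamE + mu2 + mu3 by linarith).ne'
  have z41 : w 4 1 = 0 :=
    (mul_eq_zero.mp (show (lam + lamE + mu2 + mu3) * w 4 1 = 0 by linear_combination E41)).resolve_left
      (show (0:ℝ) < lam + lamE + mu2 + mu3 by linarith).ne'
  have z51 : w 5 1 = 0 :=
    (mul_eq_zero.mp (show (lam + lamE + mu2 + mu3) * w 5 1 = 0 by linear_combination E51)).resolve_left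
      (show (0:ℝ) < lam + lamE + mu2 + mu3 by linarith).ne'
  have z61 : w 6 1 = 0 :=
    (mul_eq_zero.mp (show (lam + mu1) * w 6 1 = 0 by linear_combination E61 + (lamE) * z01 + (lamE) * z11)).resolve_left
      (show (0:ℝ) < lam + mu1 by linarith).ne'
  have z22 : w 2 2 = 0 :=
    (mul_eq_zero.mp (show (lam + lamE + mu1) * w 2 2 = 0 by linear_combination E22)).resolve_left
      (show (0:ℝ) < lam + lamE + mu1 by linarith).ne'
  have z21 : w 2 1 = 0 :=
    (mul_eq_zero.mp (show (lam * (1 - p) + lamE + mu1 + mu2) * w 2 1 = 0 by linear_combination E21 + (mu2) * z22 + (lam * p) * z01 + (lam * p) * z11)).resolve_left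
      (show (0:ℝ) < lam * (1 - p) + lamE + mu1 + mu2 by linarith).ne'
  have z72 : w 7 2 = 0 :=
    (mul_eq_zero.mp (show (lam + mu1) * w 7 2 = 0 by linear_combination E72 + (lamE) * z22)).resolve_left
      (show (0:ℝ) < lam + mu1 by linarith).ne'
  have z71 : w 7 1 = 0 :=
    (mul_eq_zero.mp (show (lam * (1 - p) + mu1 + mu2) * w 7 1 = 0 by linear_combination E71 + (lam * p) * z61 + (lamE) * z21 + (mu2) * z72)).resolve_left
      (show (0:ℝ) < lam * (1 - p) + mu1 + mu2 by linarith).ne'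
  have z32 : w 3 2 = 0 :=
    (mul_eq_zero.mp (show (lam + lamE) * w 3 2 = 0 by linear_combination E32 + (mu1) * z22 + (mu1) * z72)).resolve_left
      (show (0:ℝ) < lam + lamE by linarith).ne'
  have z43 : w 4 3 = 0 :=
    (mul_eq_zero.mp (show (lam + lamE) * w 4 3 = 0 by linear_combination E43 + (mu1) * z61 + (mu1) * z01 + (mu1) * z11)).resolve_left
      (show (0:ℝ) < lam + lamE by linarith).ne'
  have z13 : w 1 3 = 0 :=
    (mul_eq_zero.mp (show (lam * p + lamE + mu1) * w 1 3 = 0 by linear_combination E13 + (lam * (1 - p)) * z43)).resolve_left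
      (show (0:ℝ) < lam * p + lamE + mu1 by linarith).ne'
  have z33 : w 3 3 = 0 :=
    (mul_eq_zero.mp (show (lam * (1 - p) + lamE + mu2) * w 3 3 = 0 by linear_combination E33 + (lam * p) * z43 + (mu2) * z32 + (mu1) * z21 + (mu1) * z71)).resolve_left
      (show (0:ℝ) < lam * (1 - p) + lamE + mu2 by linarith).ne'
  have z02 : w 0 2 = 0 :=
    (mul_eq_zero.mp (show (lam * p + lamE + mu1) * w 0 2 = 0 by linear_combination E02 + (lam * (1 - p)) * z22 + (lam * (1 - p)) * z32)).resolve_left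
      (show (0:ℝ) < lam * p + lamE + mu1 by linarith).ne'
  have R12 : (lam * p + lamE + mu1 + mu3) * w 1 2 = lam * (1 - p) * w 4 2 := by linear_combination E12 + (mu3) * z13
  have R42 : (lam + lamE + mu3) * w 4 2 = mu1 * w 6 2 + mu1 * w 1 2 := by linear_combination E42 + (mu3) * z43 + (mu1) * z02
  have R52 : lam * w 5 2 = lamE * w 4 2 := by linear_combination E52 + (lamE) * z32
  have R62 : (lam * p + mu1) * w 6 2 = lam * (1 - p) * w 5 2 + lamE * w 1 2 := by linear_combination E62 + (lam * (1 - p)) * z72 + (lamE) * z02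
  have hPb : (0:ℝ) < lam * (lam * p + mu1) * (lam * p * lam + mu1 * (lam * p) + mu3 * lam + (lam * p + lamE + mu1 + mu3) * mu3) + lamE * (lam * p + lamE + mu1 + mu3 + lam) * (lam * p) * (lam + mu1) := by
    have c1 : (0:ℝ) < lam * (lam * p + mu1) * (lam * p * lam + mu1 * (lam * p) + mu3 * lam + (lam * p + lamE + mu1 + mu3) * mu3) :=
      mul_pos (mul_pos hlam (by linarith))
        (add_pos (add_pos (add_pos (mul_pos hq hlam) (mul_pos hmu1 hq)) (mul_pos hmu3 hlam)) (mul_pos (by linarith) hmu3))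
    have c2 : (0:ℝ) < lamE * (lam * p + lamE + mu1 + mu3 + lam) * (lam * p) * (lam + mu1) :=
      mul_pos (mul_pos (mul_pos hlamE (by linarith)) hq) (by linarith)
    linarith
  have z42 : w 4 2 = 0 :=
    (mul_eq_zero.mp (show (lam * (lam * p + mu1) * (lam * p * lam + mu1 * (lam * p) + mu3 * lam + (lam * p + lamE + mu1 + mu3) * mu3) + lamE * (lam * p + lamE + mu1 + mu3 + lam) * (lam * p) * (lam + mu1)) * w 4 2 = 0 by linear_combination (lam * (lam * p + lamE + mu1 + mu3) * (lam * p + mu1)) * R42 + (mu1 * lam * (lam * p + lamE + mu1 + mu3)) * R62 + (mu1 * (lam * p + lamE + mu1 + mu3) * (lam * (1 - p))) * R52 + (mu1 * lam * (lam * p + mu1 + lamE)) * R12)).resolve_left hPb.ne'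
  have z12 : w 1 2 = 0 :=
    (mul_eq_zero.mp (show (lam * p + lamE + mu1 + mu3) * w 1 2 = 0 by linear_combination R12 + (lam * (1 - p)) * z42)).resolve_left
      (show (0:ℝ) < lam * p + lamE + mu1 + mu3 by linarith).ne'
  have z62 : w 6 2 = 0 :=
    (mul_eq_zero.mp (show (mu1) * w 6 2 = 0 by linear_combination (-1) * R42 + (lam + lamE + mu3) * z42 + (-mu1) * z12)).resolve_left
      (show (0:ℝ) < mu1 by linarith).ne'
  have z52 : w 5 2 = 0 :=
    (mul_eq_zero.mp (show (lam) * w 5 2 = 0 by linear_combination R52 + (lamE) * z42)).resolve_left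
      (show (0:ℝ) < lam by linarith).ne'
  have R03 : (lam * p + lamE + mu1 + mu2) * w 0 3 = lam * (1 - p) * w 2 3 := by linear_combination E03 + (mu2) * z02 + (lam * (1 - p)) * z33
  have R23 : (lam * (1 - p) + lamE + mu1 + mu2) * w 2 3 = lam * p * w 0 3 := by linear_combination E23 + (mu2) * z22 + (lam * p) * z13
  have hP2 : (0:ℝ) < lam * p * (lamE + mu1 + mu2) + (lamE + mu1 + mu2) * (lam * (1 - p)) + (lamE + mu1 + mu2) * (lamE + mu1 + mu2) := by
    have c1 : (0:ℝ) < lam * p * (lamE + mu1 + mu2) := mul_pos hq (by linarith)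
    have c2 : (0:ℝ) < (lamE + mu1 + mu2) * (lam * (1 - p)) := mul_pos (by linarith) hr
    have c3 : (0:ℝ) < (lamE + mu1 + mu2) * (lamE + mu1 + mu2) := mul_pos (by linarith) (by linarith)
    linarith
  have z03 : w 0 3 = 0 :=
    (mul_eq_zero.mp (show (lam * p * (lamE + mu1 + mu2) + (lamE + mu1 + mu2) * (lam * (1 - p)) + (lamE + mu1 + mu2) * (lamE + mu1 + mu2)) * w 0 3 = 0 by linear_combination (lam * (1 - p) + lamE + mu1 + mu2) * R03 + (lam * (1 - p)) * R23)).resolve_left hP2.ne'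
  have z23 : w 2 3 = 0 :=
    (mul_eq_zero.mp (show (lam * (1 - p) + lamE + mu1 + mu2) * w 2 3 = 0 by linear_combination R23 + (lam * p) * z03)).resolve_left
      (show (0:ℝ) < lam * (1 - p) + lamE + mu1 + mu2 by linarith).ne'
  have I1 : lam * (1 - p) * (π 2 + π 3) < (lam * p + lamE + mu1 + mu2 + mu3) * π 0 := by linarith [B0, mul_pos hmu2 (hpos 0), mul_pos hmu3 (hpos 0)]
  have I2 : lam * (1 - p) * π 4 < (lam * p + lamE + mu1 + mu2 + mu3) * π 1 := by linarith [B1, mul_pos hmu2 (hpos 1), mul_pos hmu3 (hpos 1)]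
  have I3 : lam * p * (π 0 + π 1) < (lam * (1 - p) + lamE + mu1 + mu2 + mu3) * π 2 := by linarith [B2, mul_pos hmu2 (hpos 2), mul_pos hmu3 (hpos 2)]
  have I4 : lam * p * π 4 + mu1 * (π 2 + π 7) < (lam * (1 - p) + lamE + mu2 + mu3) * π 3 := by linarith [B3, mul_pos hmu2 (hpos 3), mul_pos hmu3 (hpos 3)]
  have I5 : mu1 * (π 6 + π 0 + π 1) < (lam * p + lam * (1 - p) + lamE + mu2 + mu3) * π 4 := by linarith [B4, mul_pos hmu2 (hpos 4), mul_pos hmu3 (hpos 4)]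
  have I6 : lamE * (π 3 + π 4) + mu3 * π 5 < (lam * (1 - p) + mu2 + mu3) * π 5 := by linarith [B5, mul_pos hmu2 (hpos 5)]
  have I7 : lam * (1 - p) * (π 5 + π 7) + lamE * (π 0 + π 1) + mu3 * π 6 < (lam * p + mu1 + mu2 + mu3) * π 6 := by linarith [B6, mul_pos hmu2 (hpos 6)]
  have I8 : lam * p * π 6 + lamE * π 2 + mu3 * π 7 < (lam * (1 - p) + mu1 + mu2 + mu3) * π 7 := by linarith [B7, mul_pos hmu2 (hpos 7)]
  have I9 : lamE * (π 3 + π 4 + π 5) < (lam * (1 - p) + lamE + mu2) * π 5 := by linarith [B5, mul_pos hmu2 (hpos 5)]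
  have I10 : lam * (1 - p) * (π 5 + π 7) + lamE * (π 0 + π 1 + π 6) < (lam * p + lamE + mu1 + mu2) * π 6 := by linarith [B6, mul_pos hmu2 (hpos 6)]
  have I11 : lam * p * π 6 + lamE * (π 2 + π 7) < (lam * (1 - p) + lamE + mu1 + mu2) * π 7 := by linarith [B7, mul_pos hmu2 (hpos 7)]
  have EE1 : (lam * p + lamE + mu1 + mu2 + mu3) * w 0 0 = lam * (1 - p) * (w 2 0 + w 3 0) := by linear_combination E00 + (mu2) * z02 + (mu3) * z03
  have EE2 : (lam * p + lamE + mu1 + mu2 + mu3) * w 1 0 = lam * (1 - p) * w 4 0 := by linear_combination E10 + (mu2) * z12 + (mu3) * z13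
  have EE3 : (lam * (1 - p) + lamE + mu1 + mu2 + mu3) * w 2 0 = lam * p * (w 0 0 + w 1 0) := by linear_combination E20 + (mu2) * z22 + (mu3) * z23
  have EE4 : (lam * (1 - p) + lamE + mu2 + mu3) * w 3 0 = lam * p * w 4 0 + mu1 * (w 2 0 + w 7 0) := by linear_combination E30 + (mu2) * z32 + (mu3) * z33
  have EE5 : (lam * p + lam * (1 - p) + lamE + mu2 + mu3) * w 4 0 = mu1 * (w 6 0 + w 0 0 + w 1 0) := by linear_combination E40 + (mu2) * z42 + (mu3) * z43
  have EE6 : (lam * (1 - p) + mu2 + mu3) * w 5 0 = lamE * (w 3 0 + w 4 0) + mu3 * w 5 3 := by linear_combination E50 + (mu2) * z52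
  have EE7 : (lam * p + mu1 + mu2 + mu3) * w 6 0 = lam * (1 - p) * (w 5 0 + w 7 0) + lamE * (w 0 0 + w 1 0) + mu3 * w 6 3 := by linear_combination E60 + (mu2) * z62
  have EE8 : (lam * (1 - p) + mu1 + mu2 + mu3) * w 7 0 = lam * p * w 6 0 + lamE * w 2 0 + mu3 * w 7 3 := by linear_combination E70 + (mu2) * z72
  have EE9 : (lam * (1 - p) + lamE + mu2) * w 5 3 = lamE * (w 3 0 + w 4 0 + w 5 0) := by linear_combination E53 + (mu2) * z52
  have EE10 : (lam * p + lamE + mu1 + mu2) * w 6 3 = lam * (1 - p) * (w 5 3 + w 7 3) + lamE * (w 0 0 + w 1 0 + w 6 0) := by linear_combination E63 + (mu2) * z62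
  have EE11 : (lam * (1 - p) + lamE + mu1 + mu2) * w 7 3 = lam * p * w 6 3 + lamE * (w 2 0 + w 7 0) := by linear_combination E73 + (mu2) * z72
  obtain ⟨z00, z10, z20, z30, z40, z50, z60, z70, z53, z63, z73⟩ :=
    aux11eq (lam * p) (lam * (1 - p)) lamE mu1 mu2 mu3 hq hr hlamE hmu1 hmu2 hmu3
      (π 0) (π 1) (π 2) (π 3) (π 4) (π 5) (π 6) (π 7)
      (hpos 0) (hpos 1) (hpos 2) (hpos 3) (hpos 4) (hpos 5) (hpos 6) (hpos 7)
      (w 0 0) (w 1 0) (w 2 0) (w 3 0) (w 4 0) (w 5 0) (w 6 0) (w 7 0) (w 5 3) (w 6 3) (w 7 3)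
      I1 I2 I3 I4 I5 I6 I7 I8 I9 I10 I11 EE1 EE2 EE3 EE4 EE5 EE6 EE7 EE8 EE9 EE10 EE11
  funext s k
  rcases fin8c s with rfl|rfl|rfl|rfl|rfl|rfl|rfl|rfl <;> rcases fin4c k with rfl|rfl|rfl|rfl
  exacts [z00, z01, z02, z03, z10, z11, z12, z13, z20, z21, z22, z23, z30, z31, z32, z33, z40, z41, z42, z43, z50, z51, z52, z53, z60, z61, z62, z63, z70, z71, z72, z73]

/-- For all positive parameters and `p ∈ (0,1)`, if `π` is the unique normalized positive
solution of the balance equations, then the thirty-two correlation equations (6a)–(6h) have a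
unique solution `v`, and the resulting average age of information
`Δ = v_{10} + v_{20} + ⋯ + v_{80}` is strictly positive. -/
theorem correlation_equations_unique_solution_and_positive_aoi
    (lam lamE mu1 mu2 mu3 p : ℝ)
    (hlam : 0 < lam) (hlamE : 0 < lamE) (hmu1 : 0 < mu1) (hmu2 : 0 < mu2)
    (hmu3 : 0 < mu3) (hp : 0 < p) (hp1 : p < 1)
    (π : Fin 8 → ℝ)
    (hbal : ∀ i : Fin 8, bLHS lam lamE mu1 mu2 mu3 π i = bRHS lam lamE mu1 mu2 mu3 p π i)
    (hnorm : ∑ i : Fin 8, π i = 1)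
    (hpos : ∀ i : Fin 8, 0 < π i) :
    ∃ v : Fin 8 → Fin 4 → ℝ,
      corrEq lam lamE mu1 mu2 mu3 p π v ∧
      (∀ v' : Fin 8 → Fin 4 → ℝ, corrEq lam lamE mu1 mu2 mu3 p π v' → v' = v) ∧
      0 < ∑ s : Fin 8, v s 0 := by
  have hq : 0 < lam * p := mul_pos hlam hp
  have hr : 0 < lam * (1 - p) := mul_pos hlam (by linarith)
  have B0 : (lam + lamE + mu1 + mu2 + mu3) * π 0 = (lam * (1 - p) + mu2 + mu3) * π 0 + lam * (1 - p) * (π 2 + π 3) := hbal 0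
  have B1 : (lam + lamE + mu1 + mu2 + mu3) * π 1 = (lam * (1 - p) + mu2 + mu3) * π 1 + lam * (1 - p) * π 4 := hbal 1
  have B2 : (lam + lamE + mu1 + mu2 + mu3) * π 2 = (lam * p + mu2 + mu3) * π 2 + lam * p * (π 0 + π 1) := hbal 2
  have B3 : (lam + lamE + mu1 + mu2 + mu3 - mu1) * π 3 = (lam * p + mu2 + mu3) * π 3 + lam * p * π 4 + mu1 * (π 2 + π 7) := hbal 3
  have B4 : (lam + lamE + mu1 + mu2 + mu3 - mu1) * π 4 = (mu2 + mu3) * π 4 + mu1 * (π 0 + π 1 + π 6) := hbal 4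
  have B5 : (lam + lamE + mu1 + mu2 + mu3 - mu1) * π 5 = (lam * p + lamE + mu2 + mu3) * π 5 + lamE * (π 3 + π 4) := hbal 5
  have B6 : (lam + lamE + mu1 + mu2 + mu3) * π 6 = (lam * (1 - p) + lamE + mu2 + mu3) * π 6 + lamE * (π 0 + π 1) + lam * (1 - p) * (π 5 + π 7) := hbal 6
  have B7 : (lam + lamE + mu1 + mu2 + mu3) * π 7 = (lam * p + lamE + mu2 + mu3) * π 7 + lamE * π 2 + lam * p * π 6 := hbal 7
  let T : (Fin 8 → Fin 4 → ℝ) →ₗ[ℝ] (Fin 8 → Fin 4 → ℝ) :=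
    IsLinearMap.mk' (aoiT lam lamE mu1 mu2 mu3 p) (aoiT_lin lam lamE mu1 mu2 mu3 p)
  have hinj : Function.Injective T := by
    refine (injective_iff_map_eq_zero T).mpr ?_
    intro w hw0
    refine homogZero lam lamE mu1 mu2 mu3 p hlam hlamE hmu1 hmu2 hmu3 hp hp1 π hpos
      B0 B1 B2 B3 B4 B5 B6 B7 w ?_
    intro s k
    have h1 : aoiDiag lam lamE mu1 mu2 mu3 s * w s k - aoiRHS lam lamE mu1 mu2 mu3 p w s k = 0 :=
      congrFun (congrFun hw0 s) k
    linarith [h1]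
  obtain ⟨v, hv⟩ := (LinearMap.injective_iff_surjective (f := T)).mp hinj (aoiC π)
  have F00 : (lam + lamE + mu1 + mu2 + mu3) * v 0 0 - (lam * (1 - p) * v 0 0 + mu2 * v 0 2 + mu3 * v 0 3 + lam * (1 - p) * v 2 0 + lam * (1 - p) * v 3 0) = 1 * π 0 :=
    congrFun (congrFun hv 0) 0
  have F01 : (lam + lamE + mu1 + mu2 + mu3) * v 0 1 - (mu2 * v 0 1 + mu3 * v 0 1) = 1 * π 0 :=
    congrFun (congrFun hv 0) 1
  have F02 : (lam + lamE + mu1 + mu2 + mu3) * v 0 2 - (lam * (1 - p) * v 0 2 + mu2 * v 0 2 + mu3 * v 0 2 + lam * (1 - p) * v 2 2 + lam * (1 - p) * v 3 2) = 1 * π 0 :=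
    congrFun (congrFun hv 0) 2
  have F03 : (lam + lamE + mu1 + mu2 + mu3) * v 0 3 - (lam * (1 - p) * v 0 3 + mu2 * v 0 2 + mu3 * v 0 3 + lam * (1 - p) * v 2 3 + lam * (1 - p) * v 3 3) = 1 * π 0 :=
    congrFun (congrFun hv 0) 3
  have F10 : (lam + lamE + mu1 + mu2 + mu3) * v 1 0 - (lam * (1 - p) * v 1 0 + mu2 * v 1 2 + mu3 * v 1 3 + lam * (1 - p) * v 4 0) = 1 * π 1 :=
    congrFun (congrFun hv 1) 0
  have F11 : (lam + lamE + mu1 + mu2 + mu3) * v 1 1 - (mu2 * v 1 1 + mu3 * v 1 1) = 1 * π 1 :=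
    congrFun (congrFun hv 1) 1
  have F12 : (lam + lamE + mu1 + mu2 + mu3) * v 1 2 - (lam * (1 - p) * v 1 2 + mu2 * v 1 2 + mu3 * v 1 3 + lam * (1 - p) * v 4 2) = 1 * π 1 :=
    congrFun (congrFun hv 1) 2
  have F13 : (lam + lamE + mu1 + mu2 + mu3) * v 1 3 - (lam * (1 - p) * v 1 3 + mu2 * v 1 3 + mu3 * v 1 3 + lam * (1 - p) * v 4 3) = 1 * π 1 :=
    congrFun (congrFun hv 1) 3
  have F20 : (lam + lamE + mu1 + mu2 + mu3) * v 2 0 - (lam * p * v 2 0 + mu2 * v 2 2 + mu3 * v 2 3 + lam * p * v 0 0 + lam * p * v 1 0) = 1 * π 2 :=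
    congrFun (congrFun hv 2) 0
  have F21 : (lam + lamE + mu1 + mu2 + mu3) * v 2 1 - (lam * p * v 2 1 + mu2 * v 2 2 + mu3 * v 2 1 + lam * p * v 0 1 + lam * p * v 1 1) = 1 * π 2 :=
    congrFun (congrFun hv 2) 1
  have F22 : (lam + lamE + mu1 + mu2 + mu3) * v 2 2 - (mu2 * v 2 2 + mu3 * v 2 2) = 1 * π 2 :=
    congrFun (congrFun hv 2) 2
  have F23 : (lam + lamE + mu1 + mu2 + mu3) * v 2 3 - (lam * p * v 2 3 + mu2 * v 2 2 + mu3 * v 2 3 + lam * p * v 0 3 + lam * p * v 1 3) = 1 * π 2 :=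
    congrFun (congrFun hv 2) 3
  have F30 : (lam + lamE + mu1 + mu2 + mu3 - mu1) * v 3 0 - (lam * p * (v 3 0 + v 4 0) + mu2 * v 3 2 + mu3 * v 3 3 + mu1 * (v 2 0 + v 7 0)) = 1 * π 3 :=
    congrFun (congrFun hv 3) 0
  have F31 : (lam + lamE + mu1 + mu2 + mu3 - mu1) * v 3 1 - (0) = 0 * π 3 :=
    congrFun (congrFun hv 3) 1
  have F32 : (lam + lamE + mu1 + mu2 + mu3 - mu1) * v 3 2 - (mu2 * v 3 2 + mu3 * v 3 2 + mu1 * (v 2 2 + v 7 2)) = 1 * π 3 :=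
    congrFun (congrFun hv 3) 2
  have F33 : (lam + lamE + mu1 + mu2 + mu3 - mu1) * v 3 3 - (lam * p * (v 3 3 + v 4 3) + mu2 * v 3 2 + mu3 * v 3 3 + mu1 * (v 2 1 + v 7 1)) = 1 * π 3 :=
    congrFun (congrFun hv 3) 3
  have F40 : (lam + lamE + mu1 + mu2 + mu3 - mu1) * v 4 0 - (mu1 * v 6 0 + mu2 * v 4 2 + mu3 * v 4 3 + mu1 * v 0 0 + mu1 * v 1 0) = 1 * π 4 :=
    congrFun (congrFun hv 4) 0
  have F41 : (lam + lamE + mu1 + mu2 + mu3 - mu1) * v 4 1 - (0) = 0 * π 4 :=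
    congrFun (congrFun hv 4) 1
  have F42 : (lam + lamE + mu1 + mu2 + mu3 - mu1) * v 4 2 - (mu1 * v 6 2 + mu2 * v 4 2 + mu3 * v 4 3 + mu1 * v 0 2 + mu1 * v 1 2) = 1 * π 4 :=
    congrFun (congrFun hv 4) 2
  have F43 : (lam + lamE + mu1 + mu2 + mu3 - mu1) * v 4 3 - (mu1 * v 6 1 + mu2 * v 4 3 + mu3 * v 4 3 + mu1 * v 0 1 + mu1 * v 1 1) = 1 * π 4 :=
    congrFun (congrFun hv 4) 3
  have F50 : (lam + lamE + mu1 + mu2 + mu3 - mu1) * v 5 0 - (lam * p * v 5 0 + lamE * (v 3 0 + v 4 0 + v 5 0) + mu2 * v 5 2 + mu3 * v 5 3) = 1 * π 5 :=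
    congrFun (congrFun hv 5) 0
  have F51 : (lam + lamE + mu1 + mu2 + mu3 - mu1) * v 5 1 - (0) = 0 * π 5 :=
    congrFun (congrFun hv 5) 1
  have F52 : (lam + lamE + mu1 + mu2 + mu3 - mu1) * v 5 2 - (lamE * (v 3 2 + v 4 2 + v 5 2) + mu2 * v 5 2 + mu3 * v 5 2) = 1 * π 5 :=
    congrFun (congrFun hv 5) 2
  have F53 : (lam + lamE + mu1 + mu2 + mu3 - mu1) * v 5 3 - (lam * p * v 5 3 + lamE * (v 3 0 + v 4 0 + v 5 0) + mu2 * v 5 2 + mu3 * v 5 3) = 1 * π 5 :=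
    congrFun (congrFun hv 5) 3
  have F60 : (lam + lamE + mu1 + mu2 + mu3) * v 6 0 - (lam * (1 - p) * v 5 0 + lam * (1 - p) * v 6 0 + lam * (1 - p) * v 7 0 + lamE * v 0 0 + lamE * v 1 0 + lamE * v 6 0 + mu3 * v 6 3 + mu2 * v 6 2) = 1 * π 6 :=
    congrFun (congrFun hv 6) 0
  have F61 : (lam + lamE + mu1 + mu2 + mu3) * v 6 1 - (lamE * v 0 1 + lamE * v 1 1 + lamE * v 6 1 + mu3 * v 6 1 + mu2 * v 6 1) = 1 * π 6 :=
    congrFun (congrFun hv 6) 1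
  have F62 : (lam + lamE + mu1 + mu2 + mu3) * v 6 2 - (lam * (1 - p) * v 5 2 + lam * (1 - p) * v 6 2 + lam * (1 - p) * v 7 2 + lamE * v 0 2 + lamE * v 1 2 + lamE * v 6 2 + mu3 * v 6 2 + mu2 * v 6 2) = 1 * π 6 :=
    congrFun (congrFun hv 6) 2
  have F63 : (lam + lamE + mu1 + mu2 + mu3) * v 6 3 - (lam * (1 - p) * v 5 3 + lam * (1 - p) * v 6 3 + lam * (1 - p) * v 7 3 + lamE * v 0 0 + lamE * v 1 0 + lamE * v 6 0 + mu3 * v 6 3 + mu2 * v 6 2) = 1 * π 6 :=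
    congrFun (congrFun hv 6) 3
  have F70 : (lam + lamE + mu1 + mu2 + mu3) * v 7 0 - (lam * p * v 6 0 + lamE * v 2 0 + lamE * v 7 0 + mu2 * v 7 2 + mu3 * v 7 3 + lam * p * v 7 0) = 1 * π 7 :=
    congrFun (congrFun hv 7) 0
  have F71 : (lam + lamE + mu1 + mu2 + mu3) * v 7 1 - (lam * p * v 6 1 + lamE * v 2 1 + lamE * v 7 1 + mu2 * v 7 2 + mu3 * v 7 1 + lam * p * v 7 1) = 1 * π 7 :=
    congrFun (congrFun hv 7) 1
  have F72 : (lam + lamE + mu1 + mu2 + mu3) * v 7 2 - (lamE * v 2 2 + lamE * v 7 2 + mu2 * v 7 2 + mu3 * v 7 2) = 1 * π 7 :=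
    congrFun (congrFun hv 7) 2
  have F73 : (lam + lamE + mu1 + mu2 + mu3) * v 7 3 - (lam * p * v 6 3 + lamE * v 2 0 + lamE * v 7 0 + mu2 * v 7 2 + mu3 * v 7 3 + lam * p * v 7 3) = 1 * π 7 :=
    congrFun (congrFun hv 7) 3
  have G00 : (lam + lamE + mu1 + mu2 + mu3) * v 0 0 = 1 * π 0 + lam * (1 - p) * v 0 0 + mu2 * v 0 2 + mu3 * v 0 3 + lam * (1 - p) * v 2 0 + lam * (1 - p) * v 3 0 := by linear_combination F00
  have G01 : (lam + lamE + mu1 + mu2 + mu3) * v 0 1 = 1 * π 0 + mu2 * v 0 1 + mu3 * v 0 1 := by linear_combination F01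
  have G02 : (lam + lamE + mu1 + mu2 + mu3) * v 0 2 = 1 * π 0 + lam * (1 - p) * v 0 2 + mu2 * v 0 2 + mu3 * v 0 2 + lam * (1 - p) * v 2 2 + lam * (1 - p) * v 3 2 := by linear_combination F02
  have G03 : (lam + lamE + mu1 + mu2 + mu3) * v 0 3 = 1 * π 0 + lam * (1 - p) * v 0 3 + mu2 * v 0 2 + mu3 * v 0 3 + lam * (1 - p) * v 2 3 + lam * (1 - p) * v 3 3 := by linear_combination F03
  have G10 : (lam + lamE + mu1 + mu2 + mu3) * v 1 0 = 1 * π 1 + lam * (1 - p) * v 1 0 + mu2 * v 1 2 + mu3 * v 1 3 + lam * (1 - p) * v 4 0 := by linear_combination F10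
  have G11 : (lam + lamE + mu1 + mu2 + mu3) * v 1 1 = 1 * π 1 + mu2 * v 1 1 + mu3 * v 1 1 := by linear_combination F11
  have G12 : (lam + lamE + mu1 + mu2 + mu3) * v 1 2 = 1 * π 1 + lam * (1 - p) * v 1 2 + mu2 * v 1 2 + mu3 * v 1 3 + lam * (1 - p) * v 4 2 := by linear_combination F12
  have G13 : (lam + lamE + mu1 + mu2 + mu3) * v 1 3 = 1 * π 1 + lam * (1 - p) * v 1 3 + mu2 * v 1 3 + mu3 * v 1 3 + lam * (1 - p) * v 4 3 := by linear_combination F13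
  have G20 : (lam + lamE + mu1 + mu2 + mu3) * v 2 0 = 1 * π 2 + lam * p * v 2 0 + mu2 * v 2 2 + mu3 * v 2 3 + lam * p * v 0 0 + lam * p * v 1 0 := by linear_combination F20
  have G21 : (lam + lamE + mu1 + mu2 + mu3) * v 2 1 = 1 * π 2 + lam * p * v 2 1 + mu2 * v 2 2 + mu3 * v 2 1 + lam * p * v 0 1 + lam * p * v 1 1 := by linear_combination F21
  have G22 : (lam + lamE + mu1 + mu2 + mu3) * v 2 2 = 1 * π 2 + mu2 * v 2 2 + mu3 * v 2 2 := by linear_combination F22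
  have G23 : (lam + lamE + mu1 + mu2 + mu3) * v 2 3 = 1 * π 2 + lam * p * v 2 3 + mu2 * v 2 2 + mu3 * v 2 3 + lam * p * v 0 3 + lam * p * v 1 3 := by linear_combination F23
  have G30 : (lam + lamE + mu1 + mu2 + mu3 - mu1) * v 3 0 = 1 * π 3 + lam * p * (v 3 0 + v 4 0) + mu2 * v 3 2 + mu3 * v 3 3 + mu1 * (v 2 0 + v 7 0) := by linear_combination F30
  have G31 : (lam + lamE + mu1 + mu2 + mu3 - mu1) * v 3 1 = 0 * π 3 + 0 := by linear_combination F31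
  have G32 : (lam + lamE + mu1 + mu2 + mu3 - mu1) * v 3 2 = 1 * π 3 + mu2 * v 3 2 + mu3 * v 3 2 + mu1 * (v 2 2 + v 7 2) := by linear_combination F32
  have G33 : (lam + lamE + mu1 + mu2 + mu3 - mu1) * v 3 3 = 1 * π 3 + lam * p * (v 3 3 + v 4 3) + mu2 * v 3 2 + mu3 * v 3 3 + mu1 * (v 2 1 + v 7 1) := by linear_combination F33
  have G40 : (lam + lamE + mu1 + mu2 + mu3 - mu1) * v 4 0 = 1 * π 4 + mu1 * v 6 0 + mu2 * v 4 2 + mu3 * v 4 3 + mu1 * v 0 0 + mu1 * v 1 0 := by linear_combination F40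
  have G41 : (lam + lamE + mu1 + mu2 + mu3 - mu1) * v 4 1 = 0 * π 4 + 0 := by linear_combination F41
  have G42 : (lam + lamE + mu1 + mu2 + mu3 - mu1) * v 4 2 = 1 * π 4 + mu1 * v 6 2 + mu2 * v 4 2 + mu3 * v 4 3 + mu1 * v 0 2 + mu1 * v 1 2 := by linear_combination F42
  have G43 : (lam + lamE + mu1 + mu2 + mu3 - mu1) * v 4 3 = 1 * π 4 + mu1 * v 6 1 + mu2 * v 4 3 + mu3 * v 4 3 + mu1 * v 0 1 + mu1 * v 1 1 := by linear_combination F43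
  have G50 : (lam + lamE + mu1 + mu2 + mu3 - mu1) * v 5 0 = 1 * π 5 + lam * p * v 5 0 + lamE * (v 3 0 + v 4 0 + v 5 0) + mu2 * v 5 2 + mu3 * v 5 3 := by linear_combination F50
  have G51 : (lam + lamE + mu1 + mu2 + mu3 - mu1) * v 5 1 = 0 * π 5 + 0 := by linear_combination F51
  have G52 : (lam + lamE + mu1 + mu2 + mu3 - mu1) * v 5 2 = 1 * π 5 + lamE * (v 3 2 + v 4 2 + v 5 2) + mu2 * v 5 2 + mu3 * v 5 2 := by linear_combination F52
  have G53 : (lam + lamE + mu1 + mu2 + mu3 - mu1) * v 5 3 = 1 * π 5 + lam * p * v 5 3 + lamE * (v 3 0 + v 4 0 + v 5 0) + mu2 * v 5 2 + mu3 * v 5 3 := by linear_combination F53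
  have G60 : (lam + lamE + mu1 + mu2 + mu3) * v 6 0 = 1 * π 6 + lam * (1 - p) * v 5 0 + lam * (1 - p) * v 6 0 + lam * (1 - p) * v 7 0 + lamE * v 0 0 + lamE * v 1 0 + lamE * v 6 0 + mu3 * v 6 3 + mu2 * v 6 2 := by linear_combination F60
  have G61 : (lam + lamE + mu1 + mu2 + mu3) * v 6 1 = 1 * π 6 + lamE * v 0 1 + lamE * v 1 1 + lamE * v 6 1 + mu3 * v 6 1 + mu2 * v 6 1 := by linear_combination F61
  have G62 : (lam + lamE + mu1 + mu2 + mu3) * v 6 2 = 1 * π 6 + lam * (1 - p) * v 5 2 + lam * (1 - p) * v 6 2 + lam * (1 - p) * v 7 2 + lamE * v 0 2 + lamE * v 1 2 + lamE * v 6 2 + mu3 * v 6 2 + mu2 * v 6 2 := by linear_combination F62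
  have G63 : (lam + lamE + mu1 + mu2 + mu3) * v 6 3 = 1 * π 6 + lam * (1 - p) * v 5 3 + lam * (1 - p) * v 6 3 + lam * (1 - p) * v 7 3 + lamE * v 0 0 + lamE * v 1 0 + lamE * v 6 0 + mu3 * v 6 3 + mu2 * v 6 2 := by linear_combination F63
  have G70 : (lam + lamE + mu1 + mu2 + mu3) * v 7 0 = 1 * π 7 + lam * p * v 6 0 + lamE * v 2 0 + lamE * v 7 0 + mu2 * v 7 2 + mu3 * v 7 3 + lam * p * v 7 0 := by linear_combination F70
  have G71 : (lam + lamE + mu1 + mu2 + mu3) * v 7 1 = 1 * π 7 + lam * p * v 6 1 + lamE * v 2 1 + lamE * v 7 1 + mu2 * v 7 2 + mu3 * v 7 1 + lam * p * v 7 1 := by linear_combination F71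
  have G72 : (lam + lamE + mu1 + mu2 + mu3) * v 7 2 = 1 * π 7 + lamE * v 2 2 + lamE * v 7 2 + mu2 * v 7 2 + mu3 * v 7 2 := by linear_combination F72
  have G73 : (lam + lamE + mu1 + mu2 + mu3) * v 7 3 = 1 * π 7 + lam * p * v 6 3 + lamE * v 2 0 + lamE * v 7 0 + mu2 * v 7 2 + mu3 * v 7 3 + lam * p * v 7 3 := by linear_combination F73
  have hcorr : corrEq lam lamE mu1 mu2 mu3 p π v := by
    refine ⟨?_, ?_, ?_, ?_, ?_, ?_, ?_, ?_⟩ <;> intro k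
    all_goals rcases fin4c k with rfl | rfl | rfl | rfl
    exacts [(show (lam + lamE + mu1 + mu2 + mu3) * v 0 0 = 1 * π 0 + lam * (1 - p) * v 0 0 + mu2 * v 0 2 + mu3 * v 0 3 + lam * (1 - p) * v 2 0 + lam * (1 - p) * v 3 0 by linear_combination G00),
      (show (lam + lamE + mu1 + mu2 + mu3) * v 0 1 = 1 * π 0 + lam * (1 - p) * 0 + mu2 * v 0 1 + mu3 * v 0 1 + lam * (1 - p) * 0 + lam * (1 - p) * 0 by linear_combination G01),
      (show (lam + lamE + mu1 + mu2 + mu3) * v 0 2 = 1 * π 0 + lam * (1 - p) * v 0 2 + mu2 * v 0 2 + mu3 * v 0 2 + lam * (1 - p) * v 2 2 + lam * (1 - p) * v 3 2 by linear_combination G02),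
      (show (lam + lamE + mu1 + mu2 + mu3) * v 0 3 = 1 * π 0 + lam * (1 - p) * v 0 3 + mu2 * v 0 2 + mu3 * v 0 3 + lam * (1 - p) * v 2 3 + lam * (1 - p) * v 3 3 by linear_combination G03),
      (show (lam + lamE + mu1 + mu2 + mu3) * v 1 0 = 1 * π 1 + lam * (1 - p) * v 1 0 + mu2 * v 1 2 + mu3 * v 1 3 + lam * (1 - p) * v 4 0 by linear_combination G10),
      (show (lam + lamE + mu1 + mu2 + mu3) * v 1 1 = 1 * π 1 + lam * (1 - p) * 0 + mu2 * v 1 1 + mu3 * v 1 1 + lam * (1 - p) * 0 by linear_combination G11),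
      (show (lam + lamE + mu1 + mu2 + mu3) * v 1 2 = 1 * π 1 + lam * (1 - p) * v 1 2 + mu2 * v 1 2 + mu3 * v 1 3 + lam * (1 - p) * v 4 2 by linear_combination G12),
      (show (lam + lamE + mu1 + mu2 + mu3) * v 1 3 = 1 * π 1 + lam * (1 - p) * v 1 3 + mu2 * v 1 3 + mu3 * v 1 3 + lam * (1 - p) * v 4 3 by linear_combination G13),
      (show (lam + lamE + mu1 + mu2 + mu3) * v 2 0 = 1 * π 2 + lam * p * v 2 0 + mu2 * v 2 2 + mu3 * v 2 3 + lam * p * v 0 0 + lam * p * v 1 0 by linear_combination G20),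
      (show (lam + lamE + mu1 + mu2 + mu3) * v 2 1 = 1 * π 2 + lam * p * v 2 1 + mu2 * v 2 2 + mu3 * v 2 1 + lam * p * v 0 1 + lam * p * v 1 1 by linear_combination G21),
      (show (lam + lamE + mu1 + mu2 + mu3) * v 2 2 = 1 * π 2 + lam * p * 0 + mu2 * v 2 2 + mu3 * v 2 2 + lam * p * 0 + lam * p * 0 by linear_combination G22),
      (show (lam + lamE + mu1 + mu2 + mu3) * v 2 3 = 1 * π 2 + lam * p * v 2 3 + mu2 * v 2 2 + mu3 * v 2 3 + lam * p * v 0 3 + lam * p * v 1 3 by linear_combination G23),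
      (show (lam + lamE + mu1 + mu2 + mu3 - mu1) * v 3 0 = 1 * π 3 + lam * p * (v 3 0 + v 4 0) + mu2 * v 3 2 + mu3 * v 3 3 + mu1 * (v 2 0 + v 7 0) by linear_combination G30),
      (show (lam + lamE + mu1 + mu2 + mu3 - mu1) * v 3 1 = 0 * π 3 + lam * p * (0 + 0) + mu2 * 0 + mu3 * 0 + mu1 * (0 + 0) by linear_combination G31),
      (show (lam + lamE + mu1 + mu2 + mu3 - mu1) * v 3 2 = 1 * π 3 + lam * p * (0 + 0) + mu2 * v 3 2 + mu3 * v 3 2 + mu1 * (v 2 2 + v 7 2) by linear_combination G32),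
      (show (lam + lamE + mu1 + mu2 + mu3 - mu1) * v 3 3 = 1 * π 3 + lam * p * (v 3 3 + v 4 3) + mu2 * v 3 2 + mu3 * v 3 3 + mu1 * (v 2 1 + v 7 1) by linear_combination G33),
      (show (lam + lamE + mu1 + mu2 + mu3 - mu1) * v 4 0 = 1 * π 4 + mu1 * v 6 0 + mu2 * v 4 2 + mu3 * v 4 3 + mu1 * v 0 0 + mu1 * v 1 0 by linear_combination G40),
      (show (lam + lamE + mu1 + mu2 + mu3 - mu1) * v 4 1 = 0 * π 4 + mu1 * 0 + mu2 * 0 + mu3 * 0 + mu1 * 0 + mu1 * 0 by linear_combination G41),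
      (show (lam + lamE + mu1 + mu2 + mu3 - mu1) * v 4 2 = 1 * π 4 + mu1 * v 6 2 + mu2 * v 4 2 + mu3 * v 4 3 + mu1 * v 0 2 + mu1 * v 1 2 by linear_combination G42),
      (show (lam + lamE + mu1 + mu2 + mu3 - mu1) * v 4 3 = 1 * π 4 + mu1 * v 6 1 + mu2 * v 4 3 + mu3 * v 4 3 + mu1 * v 0 1 + mu1 * v 1 1 by linear_combination G43),
      (show (lam + lamE + mu1 + mu2 + mu3 - mu1) * v 5 0 = 1 * π 5 + lam * p * v 5 0 + lamE * (v 3 0 + v 4 0 + v 5 0) + mu2 * v 5 2 + mu3 * v 5 3 by linear_combination G50),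
      (show (lam + lamE + mu1 + mu2 + mu3 - mu1) * v 5 1 = 0 * π 5 + lam * p * 0 + lamE * (0 + 0 + 0) + mu2 * 0 + mu3 * 0 by linear_combination G51),
      (show (lam + lamE + mu1 + mu2 + mu3 - mu1) * v 5 2 = 1 * π 5 + lam * p * 0 + lamE * (v 3 2 + v 4 2 + v 5 2) + mu2 * v 5 2 + mu3 * v 5 2 by linear_combination G52),
      (show (lam + lamE + mu1 + mu2 + mu3 - mu1) * v 5 3 = 1 * π 5 + lam * p * v 5 3 + lamE * (v 3 0 + v 4 0 + v 5 0) + mu2 * v 5 2 + mu3 * v 5 3 by linear_combination G53),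
      (show (lam + lamE + mu1 + mu2 + mu3) * v 6 0 = 1 * π 6 + lam * (1 - p) * v 5 0 + lam * (1 - p) * v 6 0 + lam * (1 - p) * v 7 0 + lamE * v 0 0 + lamE * v 1 0 + lamE * v 6 0 + mu3 * v 6 3 + mu2 * v 6 2 by linear_combination G60),
      (show (lam + lamE + mu1 + mu2 + mu3) * v 6 1 = 1 * π 6 + lam * (1 - p) * 0 + lam * (1 - p) * 0 + lam * (1 - p) * 0 + lamE * v 0 1 + lamE * v 1 1 + lamE * v 6 1 + mu3 * v 6 1 + mu2 * v 6 1 by linear_combination G61),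
      (show (lam + lamE + mu1 + mu2 + mu3) * v 6 2 = 1 * π 6 + lam * (1 - p) * v 5 2 + lam * (1 - p) * v 6 2 + lam * (1 - p) * v 7 2 + lamE * v 0 2 + lamE * v 1 2 + lamE * v 6 2 + mu3 * v 6 2 + mu2 * v 6 2 by linear_combination G62),
      (show (lam + lamE + mu1 + mu2 + mu3) * v 6 3 = 1 * π 6 + lam * (1 - p) * v 5 3 + lam * (1 - p) * v 6 3 + lam * (1 - p) * v 7 3 + lamE * v 0 0 + lamE * v 1 0 + lamE * v 6 0 + mu3 * v 6 3 + mu2 * v 6 2 by linear_combination G63),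
      (show (lam + lamE + mu1 + mu2 + mu3) * v 7 0 = 1 * π 7 + lam * p * v 6 0 + lamE * v 2 0 + lamE * v 7 0 + mu2 * v 7 2 + mu3 * v 7 3 + lam * p * v 7 0 by linear_combination G70),
      (show (lam + lamE + mu1 + mu2 + mu3) * v 7 1 = 1 * π 7 + lam * p * v 6 1 + lamE * v 2 1 + lamE * v 7 1 + mu2 * v 7 2 + mu3 * v 7 1 + lam * p * v 7 1 by linear_combination G71),
      (show (lam + lamE + mu1 + mu2 + mu3) * v 7 2 = 1 * π 7 + lam * p * 0 + lamE * v 2 2 + lamE * v 7 2 + mu2 * v 7 2 + mu3 * v 7 2 + lam * p * 0 by linear_combination G72),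
      (show (lam + lamE + mu1 + mu2 + mu3) * v 7 3 = 1 * π 7 + lam * p * v 6 3 + lamE * v 2 0 + lamE * v 7 0 + mu2 * v 7 2 + mu3 * v 7 3 + lam * p * v 7 3 by linear_combination G73)]
  have hnn : ∀ (s : Fin 8) (k : Fin 4), 0 ≤ v s k := by
    obtain ⟨⟨s0, k0⟩, -, hmax⟩ := Finset.exists_max_image (Finset.univ : Finset (Fin 8 × Fin 4))
      (fun z => -(v z.1 z.2) / π z.1) ⟨(0, 0), Finset.mem_univ _⟩
    obtain ⟨t, hb, hat⟩ : ∃ t : ℝ, (∀ (s : Fin 8) (k : Fin 4), -(v s k) ≤ t * π s) ∧ -(v s0 k0) = t * π s0 :=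
      ⟨-(v s0 k0) / π s0, fun s k => (div_le_iff₀ (hpos s)).mp (hmax (s, k) (Finset.mem_univ _)),
        (div_mul_cancel₀ _ (hpos s0).ne').symm⟩
    have hT : t ≤ 0 := by
      by_contra hT
      push_neg at hT
      rcases fin8c s0 with rfl|rfl|rfl|rfl|rfl|rfl|rfl|rfl <;> rcases fin4c k0 with rfl|rfl|rfl|rfl
      · linarith [G00, mul_le_mul_of_nonneg_left (hb 0 0) hr.le, mul_le_mul_of_nonneg_left (hb 0 2) hmu2.le, mul_le_mul_of_nonneg_left (hb 0 3) hmu3.le, mul_le_mul_of_nonneg_left (hb 2 0) hr.le, mul_le_mul_of_nonneg_left (hb 3 0) hr.le, mul_le_mul_of_nonneg_left B0.le hT.le, mul_le_mul_of_nonneg_left B0.ge hT.le, mul_le_mul_of_nonneg_left hat.le (show (0:ℝ) ≤ lam + lamE + mu1 + mu2 + mu3 by linarith), mul_le_mul_of_nonneg_left hat.ge (show (0:ℝ) ≤ lam + lamE + mu1 + mu2 + mu3 by linarith), hpos 0]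
      · linarith [G01, mul_le_mul_of_nonneg_left (hb 0 1) hmu2.le, mul_le_mul_of_nonneg_left (hb 0 1) hmu3.le, mul_le_mul_of_nonneg_left B0.le hT.le, mul_le_mul_of_nonneg_left B0.ge hT.le, mul_le_mul_of_nonneg_left hat.le (show (0:ℝ) ≤ lam + lamE + mu1 + mu2 + mu3 by linarith), mul_le_mul_of_nonneg_left hat.ge (show (0:ℝ) ≤ lam + lamE + mu1 + mu2 + mu3 by linarith), mul_pos hr (mul_pos hT (hpos 0)), mul_pos hr (mul_pos hT (hpos 2)), mul_pos hr (mul_pos hT (hpos 3)), hpos 0]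
      · linarith [G02, mul_le_mul_of_nonneg_left (hb 0 2) hr.le, mul_le_mul_of_nonneg_left (hb 0 2) hmu2.le, mul_le_mul_of_nonneg_left (hb 0 2) hmu3.le, mul_le_mul_of_nonneg_left (hb 2 2) hr.le, mul_le_mul_of_nonneg_left (hb 3 2) hr.le, mul_le_mul_of_nonneg_left B0.le hT.le, mul_le_mul_of_nonneg_left B0.ge hT.le, mul_le_mul_of_nonneg_left hat.le (show (0:ℝ) ≤ lam + lamE + mu1 + mu2 + mu3 by linarith), mul_le_mul_of_nonneg_left hat.ge (show (0:ℝ) ≤ lam + lamE + mu1 + mu2 + mu3 by linarith), hpos 0]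
      · linarith [G03, mul_le_mul_of_nonneg_left (hb 0 3) hr.le, mul_le_mul_of_nonneg_left (hb 0 2) hmu2.le, mul_le_mul_of_nonneg_left (hb 0 3) hmu3.le, mul_le_mul_of_nonneg_left (hb 2 3) hr.le, mul_le_mul_of_nonneg_left (hb 3 3) hr.le, mul_le_mul_of_nonneg_left B0.le hT.le, mul_le_mul_of_nonneg_left B0.ge hT.le, mul_le_mul_of_nonneg_left hat.le (show (0:ℝ) ≤ lam + lamE + mu1 + mu2 + mu3 by linarith), mul_le_mul_of_nonneg_left hat.ge (show (0:ℝ) ≤ lam + lamE + mu1 + mu2 + mu3 by linarith), hpos 0]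
      · linarith [G10, mul_le_mul_of_nonneg_left (hb 1 0) hr.le, mul_le_mul_of_nonneg_left (hb 1 2) hmu2.le, mul_le_mul_of_nonneg_left (hb 1 3) hmu3.le, mul_le_mul_of_nonneg_left (hb 4 0) hr.le, mul_le_mul_of_nonneg_left B1.le hT.le, mul_le_mul_of_nonneg_left B1.ge hT.le, mul_le_mul_of_nonneg_left hat.le (show (0:ℝ) ≤ lam + lamE + mu1 + mu2 + mu3 by linarith), mul_le_mul_of_nonneg_left hat.ge (show (0:ℝ) ≤ lam + lamE + mu1 + mu2 + mu3 by linarith), hpos 1]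
      · linarith [G11, mul_le_mul_of_nonneg_left (hb 1 1) hmu2.le, mul_le_mul_of_nonneg_left (hb 1 1) hmu3.le, mul_le_mul_of_nonneg_left B1.le hT.le, mul_le_mul_of_nonneg_left B1.ge hT.le, mul_le_mul_of_nonneg_left hat.le (show (0:ℝ) ≤ lam + lamE + mu1 + mu2 + mu3 by linarith), mul_le_mul_of_nonneg_left hat.ge (show (0:ℝ) ≤ lam + lamE + mu1 + mu2 + mu3 by linarith), mul_pos hr (mul_pos hT (hpos 1)), mul_pos hr (mul_pos hT (hpos 4)), hpos 1]
      · linarith [G12, mul_le_mul_of_nonneg_left (hb 1 2) hr.le, mul_le_mul_of_nonneg_left (hb 1 2) hmu2.le, mul_le_mul_of_nonneg_left (hb 1 3) hmu3.le, mul_le_mul_of_nonneg_left (hb 4 2) hr.le, mul_le_mul_of_nonneg_left B1.le hT.le, mul_le_mul_of_nonneg_left B1.ge hT.le, mul_le_mul_of_nonneg_left hat.le (show (0:ℝ) ≤ lam + lamE + mu1 + mu2 + mu3 by linarith), mul_le_mul_of_nonneg_left hat.ge (show (0:ℝ) ≤ lam + lamE + mu1 + mu2 + mu3 by linarith), hpos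 1]
      · linarith [G13, mul_le_mul_of_nonneg_left (hb 1 3) hr.le, mul_le_mul_of_nonneg_left (hb 1 3) hmu2.le, mul_le_mul_of_nonneg_left (hb 1 3) hmu3.le, mul_le_mul_of_nonneg_left (hb 4 3) hr.le, mul_le_mul_of_nonneg_left B1.le hT.le, mul_le_mul_of_nonneg_left B1.ge hT.le, mul_le_mul_of_nonneg_left hat.le (show (0:ℝ) ≤ lam + lamE + mu1 + mu2 + mu3 by linarith), mul_le_mul_of_nonneg_left hat.ge (show (0:ℝ) ≤ lam + lamE + mu1 + mu2 + mu3 by linarith), hpos 1]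
      · linarith [G20, mul_le_mul_of_nonneg_left (hb 2 0) hq.le, mul_le_mul_of_nonneg_left (hb 2 2) hmu2.le, mul_le_mul_of_nonneg_left (hb 2 3) hmu3.le, mul_le_mul_of_nonneg_left (hb 0 0) hq.le, mul_le_mul_of_nonneg_left (hb 1 0) hq.le, mul_le_mul_of_nonneg_left B2.le hT.le, mul_le_mul_of_nonneg_left B2.ge hT.le, mul_le_mul_of_nonneg_left hat.le (show (0:ℝ) ≤ lam + lamE + mu1 + mu2 + mu3 by linarith), mul_le_mul_of_nonneg_left hat.ge (show (0:ℝ) ≤ lam + lamE + mu1 + mu2 + mu3 by linarith), hpos 2]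
      · linarith [G21, mul_le_mul_of_nonneg_left (hb 2 1) hq.le, mul_le_mul_of_nonneg_left (hb 2 2) hmu2.le, mul_le_mul_of_nonneg_left (hb 2 1) hmu3.le, mul_le_mul_of_nonneg_left (hb 0 1) hq.le, mul_le_mul_of_nonneg_left (hb 1 1) hq.le, mul_le_mul_of_nonneg_left B2.le hT.le, mul_le_mul_of_nonneg_left B2.ge hT.le, mul_le_mul_of_nonneg_left hat.le (show (0:ℝ) ≤ lam + lamE + mu1 + mu2 + mu3 by linarith), mul_le_mul_of_nonneg_left hat.ge (show (0:ℝ) ≤ lam + lamE + mu1 + mu2 + mu3 by linarith), hpos 2]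
      · linarith [G22, mul_le_mul_of_nonneg_left (hb 2 2) hmu2.le, mul_le_mul_of_nonneg_left (hb 2 2) hmu3.le, mul_le_mul_of_nonneg_left B2.le hT.le, mul_le_mul_of_nonneg_left B2.ge hT.le, mul_le_mul_of_nonneg_left hat.le (show (0:ℝ) ≤ lam + lamE + mu1 + mu2 + mu3 by linarith), mul_le_mul_of_nonneg_left hat.ge (show (0:ℝ) ≤ lam + lamE + mu1 + mu2 + mu3 by linarith), mul_pos hq (mul_pos hT (hpos 2)), mul_pos hq (mul_pos hT (hpos 0)), mul_pos hq (mul_pos hT (hpos 1)), hpos 2]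
      · linarith [G23, mul_le_mul_of_nonneg_left (hb 2 3) hq.le, mul_le_mul_of_nonneg_left (hb 2 2) hmu2.le, mul_le_mul_of_nonneg_left (hb 2 3) hmu3.le, mul_le_mul_of_nonneg_left (hb 0 3) hq.le, mul_le_mul_of_nonneg_left (hb 1 3) hq.le, mul_le_mul_of_nonneg_left B2.le hT.le, mul_le_mul_of_nonneg_left B2.ge hT.le, mul_le_mul_of_nonneg_left hat.le (show (0:ℝ) ≤ lam + lamE + mu1 + mu2 + mu3 by linarith), mul_le_mul_of_nonneg_left hat.ge (show (0:ℝ) ≤ lam + lamE + mu1 + mu2 + mu3 by linarith), hpos 2]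
      · linarith [G30, mul_le_mul_of_nonneg_left (hb 3 0) hq.le, mul_le_mul_of_nonneg_left (hb 4 0) hq.le, mul_le_mul_of_nonneg_left (hb 3 2) hmu2.le, mul_le_mul_of_nonneg_left (hb 3 3) hmu3.le, mul_le_mul_of_nonneg_left (hb 2 0) hmu1.le, mul_le_mul_of_nonneg_left (hb 7 0) hmu1.le, mul_le_mul_of_nonneg_left B3.le hT.le, mul_le_mul_of_nonneg_left B3.ge hT.le, mul_le_mul_of_nonneg_left hat.le (show (0:ℝ) ≤ lam + lamE + mu1 + mu2 + mu3 - mu1 by linarith), mul_le_mul_of_nonneg_left hat.ge (show (0:ℝ) ≤ lam + lamE + mu1 + mu2 + mu3 - mu1 by linarith), hpos 3]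
      · linarith [G31, mul_le_mul_of_nonneg_left B3.le hT.le, mul_le_mul_of_nonneg_left B3.ge hT.le, mul_le_mul_of_nonneg_left hat.le (show (0:ℝ) ≤ lam + lamE + mu1 + mu2 + mu3 - mu1 by linarith), mul_le_mul_of_nonneg_left hat.ge (show (0:ℝ) ≤ lam + lamE + mu1 + mu2 + mu3 - mu1 by linarith), mul_pos hq (mul_pos hT (hpos 3)), mul_pos hmu2 (mul_pos hT (hpos 3)), mul_pos hmu3 (mul_pos hT (hpos 3)), mul_pos hq (mul_pos hT (hpos 4)), mul_pos hmu1 (mul_pos hT (hpos 2)), mul_pos hmu1 (mul_pos hT (hpos 7)), hpos 3]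
      · linarith [G32, mul_le_mul_of_nonneg_left (hb 3 2) hmu2.le, mul_le_mul_of_nonneg_left (hb 3 2) hmu3.le, mul_le_mul_of_nonneg_left (hb 2 2) hmu1.le, mul_le_mul_of_nonneg_left (hb 7 2) hmu1.le, mul_le_mul_of_nonneg_left B3.le hT.le, mul_le_mul_of_nonneg_left B3.ge hT.le, mul_le_mul_of_nonneg_left hat.le (show (0:ℝ) ≤ lam + lamE + mu1 + mu2 + mu3 - mu1 by linarith), mul_le_mul_of_nonneg_left hat.ge (show (0:ℝ) ≤ lam + lamE + mu1 + mu2 + mu3 - mu1 by linarith), mul_pos hq (mul_pos hT (hpos 3)), mul_pos hq (mul_pos hT (hpos 4)), hpos 3]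
      · linarith [G33, mul_le_mul_of_nonneg_left (hb 3 3) hq.le, mul_le_mul_of_nonneg_left (hb 4 3) hq.le, mul_le_mul_of_nonneg_left (hb 3 2) hmu2.le, mul_le_mul_of_nonneg_left (hb 3 3) hmu3.le, mul_le_mul_of_nonneg_left (hb 2 1) hmu1.le, mul_le_mul_of_nonneg_left (hb 7 1) hmu1.le, mul_le_mul_of_nonneg_left B3.le hT.le, mul_le_mul_of_nonneg_left B3.ge hT.le, mul_le_mul_of_nonneg_left hat.le (show (0:ℝ) ≤ lam + lamE + mu1 + mu2 + mu3 - mu1 by linarith), mul_le_mul_of_nonneg_left hat.ge (show (0:ℝ) ≤ lam + lamE + mu1 + mu2 + mu3 - mu1 by linarith), hpos 3]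
      · linarith [G40, mul_le_mul_of_nonneg_left (hb 6 0) hmu1.le, mul_le_mul_of_nonneg_left (hb 4 2) hmu2.le, mul_le_mul_of_nonneg_left (hb 4 3) hmu3.le, mul_le_mul_of_nonneg_left (hb 0 0) hmu1.le, mul_le_mul_of_nonneg_left (hb 1 0) hmu1.le, mul_le_mul_of_nonneg_left B4.le hT.le, mul_le_mul_of_nonneg_left B4.ge hT.le, mul_le_mul_of_nonneg_left hat.le (show (0:ℝ) ≤ lam + lamE + mu1 + mu2 + mu3 - mu1 by linarith), mul_le_mul_of_nonneg_left hat.ge (show (0:ℝ) ≤ lam + lamE + mu1 + mu2 + mu3 - mu1 by linarith), hpos 4]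
      · linarith [G41, mul_le_mul_of_nonneg_left B4.le hT.le, mul_le_mul_of_nonneg_left B4.ge hT.le, mul_le_mul_of_nonneg_left hat.le (show (0:ℝ) ≤ lam + lamE + mu1 + mu2 + mu3 - mu1 by linarith), mul_le_mul_of_nonneg_left hat.ge (show (0:ℝ) ≤ lam + lamE + mu1 + mu2 + mu3 - mu1 by linarith), mul_pos hmu2 (mul_pos hT (hpos 4)), mul_pos hmu3 (mul_pos hT (hpos 4)), mul_pos hmu1 (mul_pos hT (hpos 0)), mul_pos hmu1 (mul_pos hT (hpos 1)), mul_pos hmu1 (mul_pos hT (hpos 6)), hpos 4]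
      · linarith [G42, mul_le_mul_of_nonneg_left (hb 6 2) hmu1.le, mul_le_mul_of_nonneg_left (hb 4 2) hmu2.le, mul_le_mul_of_nonneg_left (hb 4 3) hmu3.le, mul_le_mul_of_nonneg_left (hb 0 2) hmu1.le, mul_le_mul_of_nonneg_left (hb 1 2) hmu1.le, mul_le_mul_of_nonneg_left B4.le hT.le, mul_le_mul_of_nonneg_left B4.ge hT.le, mul_le_mul_of_nonneg_left hat.le (show (0:ℝ) ≤ lam + lamE + mu1 + mu2 + mu3 - mu1 by linarith), mul_le_mul_of_nonneg_left hat.ge (show (0:ℝ) ≤ lam + lamE + mu1 + mu2 + mu3 - mu1 by linarith), hpos 4]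
      · linarith [G43, mul_le_mul_of_nonneg_left (hb 6 1) hmu1.le, mul_le_mul_of_nonneg_left (hb 4 3) hmu2.le, mul_le_mul_of_nonneg_left (hb 4 3) hmu3.le, mul_le_mul_of_nonneg_left (hb 0 1) hmu1.le, mul_le_mul_of_nonneg_left (hb 1 1) hmu1.le, mul_le_mul_of_nonneg_left B4.le hT.le, mul_le_mul_of_nonneg_left B4.ge hT.le, mul_le_mul_of_nonneg_left hat.le (show (0:ℝ) ≤ lam + lamE + mu1 + mu2 + mu3 - mu1 by linarith), mul_le_mul_of_nonneg_left hat.ge (show (0:ℝ) ≤ lam + lamE + mu1 + mu2 + mu3 - mu1 by linarith), hpos 4]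
      · linarith [G50, mul_le_mul_of_nonneg_left (hb 5 0) hq.le, mul_le_mul_of_nonneg_left (hb 3 0) hlamE.le, mul_le_mul_of_nonneg_left (hb 4 0) hlamE.le, mul_le_mul_of_nonneg_left (hb 5 0) hlamE.le, mul_le_mul_of_nonneg_left (hb 5 2) hmu2.le, mul_le_mul_of_nonneg_left (hb 5 3) hmu3.le, mul_le_mul_of_nonneg_left B5.le hT.le, mul_le_mul_of_nonneg_left B5.ge hT.le, mul_le_mul_of_nonneg_left hat.le (show (0:ℝ) ≤ lam + lamE + mu1 + mu2 + mu3 - mu1 by linarith), mul_le_mul_of_nonneg_left hat.ge (show (0:ℝ) ≤ lam + lamE + mu1 + mu2 + mu3 - mu1 by linarith), hpos 5]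
      · linarith [G51, mul_le_mul_of_nonneg_left B5.le hT.le, mul_le_mul_of_nonneg_left B5.ge hT.le, mul_le_mul_of_nonneg_left hat.le (show (0:ℝ) ≤ lam + lamE + mu1 + mu2 + mu3 - mu1 by linarith), mul_le_mul_of_nonneg_left hat.ge (show (0:ℝ) ≤ lam + lamE + mu1 + mu2 + mu3 - mu1 by linarith), mul_pos hq (mul_pos hT (hpos 5)), mul_pos hlamE (mul_pos hT (hpos 5)), mul_pos hmu2 (mul_pos hT (hpos 5)), mul_pos hmu3 (mul_pos hT (hpos 5)), mul_pos hlamE (mul_pos hT (hpos 3)), mul_pos hlamE (mul_pos hT (hpos 4)), hpos 5]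
      · linarith [G52, mul_le_mul_of_nonneg_left (hb 3 2) hlamE.le, mul_le_mul_of_nonneg_left (hb 4 2) hlamE.le, mul_le_mul_of_nonneg_left (hb 5 2) hlamE.le, mul_le_mul_of_nonneg_left (hb 5 2) hmu2.le, mul_le_mul_of_nonneg_left (hb 5 2) hmu3.le, mul_le_mul_of_nonneg_left B5.le hT.le, mul_le_mul_of_nonneg_left B5.ge hT.le, mul_le_mul_of_nonneg_left hat.le (show (0:ℝ) ≤ lam + lamE + mu1 + mu2 + mu3 - mu1 by linarith), mul_le_mul_of_nonneg_left hat.ge (show (0:ℝ) ≤ lam + lamE + mu1 + mu2 + mu3 - mu1 by linarith), mul_pos hq (mul_pos hT (hpos 5)), hpos 5]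
      · linarith [G53, mul_le_mul_of_nonneg_left (hb 5 3) hq.le, mul_le_mul_of_nonneg_left (hb 3 0) hlamE.le, mul_le_mul_of_nonneg_left (hb 4 0) hlamE.le, mul_le_mul_of_nonneg_left (hb 5 0) hlamE.le, mul_le_mul_of_nonneg_left (hb 5 2) hmu2.le, mul_le_mul_of_nonneg_left (hb 5 3) hmu3.le, mul_le_mul_of_nonneg_left B5.le hT.le, mul_le_mul_of_nonneg_left B5.ge hT.le, mul_le_mul_of_nonneg_left hat.le (show (0:ℝ) ≤ lam + lamE + mu1 + mu2 + mu3 - mu1 by linarith), mul_le_mul_of_nonneg_left hat.ge (show (0:ℝ) ≤ lam + lamE + mu1 + mu2 + mu3 - mu1 by linarith), hpos 5]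
      · linarith [G60, mul_le_mul_of_nonneg_left (hb 5 0) hr.le, mul_le_mul_of_nonneg_left (hb 6 0) hr.le, mul_le_mul_of_nonneg_left (hb 7 0) hr.le, mul_le_mul_of_nonneg_left (hb 0 0) hlamE.le, mul_le_mul_of_nonneg_left (hb 1 0) hlamE.le, mul_le_mul_of_nonneg_left (hb 6 0) hlamE.le, mul_le_mul_of_nonneg_left (hb 6 3) hmu3.le, mul_le_mul_of_nonneg_left (hb 6 2) hmu2.le, mul_le_mul_of_nonneg_left B6.le hT.le, mul_le_mul_of_nonneg_left B6.ge hT.le, mul_le_mul_of_nonneg_left hat.le (show (0:ℝ) ≤ lam + lamE + mu1 + mu2 + mu3 by linarith), mul_le_mul_of_nonneg_left hat.ge (show (0:ℝ) ≤ lam + lamE + mu1 + mu2 + mu3 by linarith), hpos 6]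
      · linarith [G61, mul_le_mul_of_nonneg_left (hb 0 1) hlamE.le, mul_le_mul_of_nonneg_left (hb 1 1) hlamE.le, mul_le_mul_of_nonneg_left (hb 6 1) hlamE.le, mul_le_mul_of_nonneg_left (hb 6 1) hmu3.le, mul_le_mul_of_nonneg_left (hb 6 1) hmu2.le, mul_le_mul_of_nonneg_left B6.le hT.le, mul_le_mul_of_nonneg_left B6.ge hT.le, mul_le_mul_of_nonneg_left hat.le (show (0:ℝ) ≤ lam + lamE + mu1 + mu2 + mu3 by linarith), mul_le_mul_of_nonneg_left hat.ge (show (0:ℝ) ≤ lam + lamE + mu1 + mu2 + mu3 by linarith), mul_pos hr (mul_pos hT (hpos 6)), mul_pos hr (mul_pos hT (hpos 5)), mul_pos hr (mul_pos hT (hpos 7)), hpos 6]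
      · linarith [G62, mul_le_mul_of_nonneg_left (hb 5 2) hr.le, mul_le_mul_of_nonneg_left (hb 6 2) hr.le, mul_le_mul_of_nonneg_left (hb 7 2) hr.le, mul_le_mul_of_nonneg_left (hb 0 2) hlamE.le, mul_le_mul_of_nonneg_left (hb 1 2) hlamE.le, mul_le_mul_of_nonneg_left (hb 6 2) hlamE.le, mul_le_mul_of_nonneg_left (hb 6 2) hmu3.le, mul_le_mul_of_nonneg_left (hb 6 2) hmu2.le, mul_le_mul_of_nonneg_left B6.le hT.le, mul_le_mul_of_nonneg_left B6.ge hT.le, mul_le_mul_of_nonneg_left hat.le (show (0:ℝ) ≤ lam + lamE + mu1 + mu2 + mu3 by linarith), mul_le_mul_of_nonneg_left hat.ge (show (0:ℝ) ≤ lam + lamE + mu1 + mu2 + mu3 by linarith), hpos 6]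
      · linarith [G63, mul_le_mul_of_nonneg_left (hb 5 3) hr.le, mul_le_mul_of_nonneg_left (hb 6 3) hr.le, mul_le_mul_of_nonneg_left (hb 7 3) hr.le, mul_le_mul_of_nonneg_left (hb 0 0) hlamE.le, mul_le_mul_of_nonneg_left (hb 1 0) hlamE.le, mul_le_mul_of_nonneg_left (hb 6 0) hlamE.le, mul_le_mul_of_nonneg_left (hb 6 3) hmu3.le, mul_le_mul_of_nonneg_left (hb 6 2) hmu2.le, mul_le_mul_of_nonneg_left B6.le hT.le, mul_le_mul_of_nonneg_left B6.ge hT.le, mul_le_mul_of_nonneg_left hat.le (show (0:ℝ) ≤ lam + lamE + mu1 + mu2 + mu3 by linarith), mul_le_mul_of_nonneg_left hat.ge (show (0:ℝ) ≤ lam + lamE + mu1 + mu2 + mu3 by linarith), hpos 6]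
      · linarith [G70, mul_le_mul_of_nonneg_left (hb 6 0) hq.le, mul_le_mul_of_nonneg_left (hb 2 0) hlamE.le, mul_le_mul_of_nonneg_left (hb 7 0) hlamE.le, mul_le_mul_of_nonneg_left (hb 7 2) hmu2.le, mul_le_mul_of_nonneg_left (hb 7 3) hmu3.le, mul_le_mul_of_nonneg_left (hb 7 0) hq.le, mul_le_mul_of_nonneg_left B7.le hT.le, mul_le_mul_of_nonneg_left B7.ge hT.le, mul_le_mul_of_nonneg_left hat.le (show (0:ℝ) ≤ lam + lamE + mu1 + mu2 + mu3 by linarith), mul_le_mul_of_nonneg_left hat.ge (show (0:ℝ) ≤ lam + lamE + mu1 + mu2 + mu3 by linarith), hpos 7]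
      · linarith [G71, mul_le_mul_of_nonneg_left (hb 6 1) hq.le, mul_le_mul_of_nonneg_left (hb 2 1) hlamE.le, mul_le_mul_of_nonneg_left (hb 7 1) hlamE.le, mul_le_mul_of_nonneg_left (hb 7 2) hmu2.le, mul_le_mul_of_nonneg_left (hb 7 1) hmu3.le, mul_le_mul_of_nonneg_left (hb 7 1) hq.le, mul_le_mul_of_nonneg_left B7.le hT.le, mul_le_mul_of_nonneg_left B7.ge hT.le, mul_le_mul_of_nonneg_left hat.le (show (0:ℝ) ≤ lam + lamE + mu1 + mu2 + mu3 by linarith), mul_le_mul_of_nonneg_left hat.ge (show (0:ℝ) ≤ lam + lamE + mu1 + mu2 + mu3 by linarith), hpos 7]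
      · linarith [G72, mul_le_mul_of_nonneg_left (hb 2 2) hlamE.le, mul_le_mul_of_nonneg_left (hb 7 2) hlamE.le, mul_le_mul_of_nonneg_left (hb 7 2) hmu2.le, mul_le_mul_of_nonneg_left (hb 7 2) hmu3.le, mul_le_mul_of_nonneg_left B7.le hT.le, mul_le_mul_of_nonneg_left B7.ge hT.le, mul_le_mul_of_nonneg_left hat.le (show (0:ℝ) ≤ lam + lamE + mu1 + mu2 + mu3 by linarith), mul_le_mul_of_nonneg_left hat.ge (show (0:ℝ) ≤ lam + lamE + mu1 + mu2 + mu3 by linarith), mul_pos hq (mul_pos hT (hpos 7)), mul_pos hq (mul_pos hT (hpos 6)), hpos 7]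
      · linarith [G73, mul_le_mul_of_nonneg_left (hb 6 3) hq.le, mul_le_mul_of_nonneg_left (hb 2 0) hlamE.le, mul_le_mul_of_nonneg_left (hb 7 0) hlamE.le, mul_le_mul_of_nonneg_left (hb 7 2) hmu2.le, mul_le_mul_of_nonneg_left (hb 7 3) hmu3.le, mul_le_mul_of_nonneg_left (hb 7 3) hq.le, mul_le_mul_of_nonneg_left B7.le hT.le, mul_le_mul_of_nonneg_left B7.ge hT.le, mul_le_mul_of_nonneg_left hat.le (show (0:ℝ) ≤ lam + lamE + mu1 + mu2 + mu3 by linarith), mul_le_mul_of_nonneg_left hat.ge (show (0:ℝ) ≤ lam + lamE + mu1 + mu2 + mu3 by linarith), hpos 7]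
    intro s k
    linarith [hb s k, mul_nonneg (neg_nonneg.mpr hT) (hpos s).le]
  refine ⟨v, hcorr, ?_, ?_⟩
  · intro v' hc'
    obtain ⟨h1', h2', h3', h4', h5', h6', h7', h8'⟩ := hc'
    have P00 : (lam + lamE + mu1 + mu2 + mu3) * v' 0 0 = 1 * π 0 + lam * (1 - p) * v' 0 0 + mu2 * v' 0 2 + mu3 * v' 0 3 + lam * (1 - p) * v' 2 0 + lam * (1 - p) * v' 3 0 := h1' 0
    have P01 : (lam + lamE + mu1 + mu2 + mu3) * v' 0 1 = 1 * π 0 + lam * (1 - p) * 0 + mu2 * v' 0 1 + mu3 * v' 0 1 + lam * (1 - p) * 0 + lam * (1 - p) * 0 := h1' 1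
    have P02 : (lam + lamE + mu1 + mu2 + mu3) * v' 0 2 = 1 * π 0 + lam * (1 - p) * v' 0 2 + mu2 * v' 0 2 + mu3 * v' 0 2 + lam * (1 - p) * v' 2 2 + lam * (1 - p) * v' 3 2 := h1' 2
    have P03 : (lam + lamE + mu1 + mu2 + mu3) * v' 0 3 = 1 * π 0 + lam * (1 - p) * v' 0 3 + mu2 * v' 0 2 + mu3 * v' 0 3 + lam * (1 - p) * v' 2 3 + lam * (1 - p) * v' 3 3 := h1' 3
    have P10 : (lam + lamE + mu1 + mu2 + mu3) * v' 1 0 = 1 * π 1 + lam * (1 - p) * v' 1 0 + mu2 * v' 1 2 + mu3 * v' 1 3 + lam * (1 - p) * v' 4 0 := h2' 0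
    have P11 : (lam + lamE + mu1 + mu2 + mu3) * v' 1 1 = 1 * π 1 + lam * (1 - p) * 0 + mu2 * v' 1 1 + mu3 * v' 1 1 + lam * (1 - p) * 0 := h2' 1
    have P12 : (lam + lamE + mu1 + mu2 + mu3) * v' 1 2 = 1 * π 1 + lam * (1 - p) * v' 1 2 + mu2 * v' 1 2 + mu3 * v' 1 3 + lam * (1 - p) * v' 4 2 := h2' 2
    have P13 : (lam + lamE + mu1 + mu2 + mu3) * v' 1 3 = 1 * π 1 + lam * (1 - p) * v' 1 3 + mu2 * v' 1 3 + mu3 * v' 1 3 + lam * (1 - p) * v' 4 3 := h2' 3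
    have P20 : (lam + lamE + mu1 + mu2 + mu3) * v' 2 0 = 1 * π 2 + lam * p * v' 2 0 + mu2 * v' 2 2 + mu3 * v' 2 3 + lam * p * v' 0 0 + lam * p * v' 1 0 := h3' 0
    have P21 : (lam + lamE + mu1 + mu2 + mu3) * v' 2 1 = 1 * π 2 + lam * p * v' 2 1 + mu2 * v' 2 2 + mu3 * v' 2 1 + lam * p * v' 0 1 + lam * p * v' 1 1 := h3' 1
    have P22 : (lam + lamE + mu1 + mu2 + mu3) * v' 2 2 = 1 * π 2 + lam * p * 0 + mu2 * v' 2 2 + mu3 * v' 2 2 + lam * p * 0 + lam * p * 0 := h3' 2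
    have P23 : (lam + lamE + mu1 + mu2 + mu3) * v' 2 3 = 1 * π 2 + lam * p * v' 2 3 + mu2 * v' 2 2 + mu3 * v' 2 3 + lam * p * v' 0 3 + lam * p * v' 1 3 := h3' 3
    have P30 : (lam + lamE + mu1 + mu2 + mu3 - mu1) * v' 3 0 = 1 * π 3 + lam * p * (v' 3 0 + v' 4 0) + mu2 * v' 3 2 + mu3 * v' 3 3 + mu1 * (v' 2 0 + v' 7 0) := h4' 0
    have P31 : (lam + lamE + mu1 + mu2 + mu3 - mu1) * v' 3 1 = 0 * π 3 + lam * p * (0 + 0) + mu2 * 0 + mu3 * 0 + mu1 * (0 + 0) := h4' 1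
    have P32 : (lam + lamE + mu1 + mu2 + mu3 - mu1) * v' 3 2 = 1 * π 3 + lam * p * (0 + 0) + mu2 * v' 3 2 + mu3 * v' 3 2 + mu1 * (v' 2 2 + v' 7 2) := h4' 2
    have P33 : (lam + lamE + mu1 + mu2 + mu3 - mu1) * v' 3 3 = 1 * π 3 + lam * p * (v' 3 3 + v' 4 3) + mu2 * v' 3 2 + mu3 * v' 3 3 + mu1 * (v' 2 1 + v' 7 1) := h4' 3
    have P40 : (lam + lamE + mu1 + mu2 + mu3 - mu1) * v' 4 0 = 1 * π 4 + mu1 * v' 6 0 + mu2 * v' 4 2 + mu3 * v' 4 3 + mu1 * v' 0 0 + mu1 * v' 1 0 := h5' 0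
    have P41 : (lam + lamE + mu1 + mu2 + mu3 - mu1) * v' 4 1 = 0 * π 4 + mu1 * 0 + mu2 * 0 + mu3 * 0 + mu1 * 0 + mu1 * 0 := h5' 1
    have P42 : (lam + lamE + mu1 + mu2 + mu3 - mu1) * v' 4 2 = 1 * π 4 + mu1 * v' 6 2 + mu2 * v' 4 2 + mu3 * v' 4 3 + mu1 * v' 0 2 + mu1 * v' 1 2 := h5' 2
    have P43 : (lam + lamE + mu1 + mu2 + mu3 - mu1) * v' 4 3 = 1 * π 4 + mu1 * v' 6 1 + mu2 * v' 4 3 + mu3 * v' 4 3 + mu1 * v' 0 1 + mu1 * v' 1 1 := h5' 3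
    have P50 : (lam + lamE + mu1 + mu2 + mu3 - mu1) * v' 5 0 = 1 * π 5 + lam * p * v' 5 0 + lamE * (v' 3 0 + v' 4 0 + v' 5 0) + mu2 * v' 5 2 + mu3 * v' 5 3 := h6' 0
    have P51 : (lam + lamE + mu1 + mu2 + mu3 - mu1) * v' 5 1 = 0 * π 5 + lam * p * 0 + lamE * (0 + 0 + 0) + mu2 * 0 + mu3 * 0 := h6' 1
    have P52 : (lam + lamE + mu1 + mu2 + mu3 - mu1) * v' 5 2 = 1 * π 5 + lam * p * 0 + lamE * (v' 3 2 + v' 4 2 + v' 5 2) + mu2 * v' 5 2 + mu3 * v' 5 2 := h6' 2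
    have P53 : (lam + lamE + mu1 + mu2 + mu3 - mu1) * v' 5 3 = 1 * π 5 + lam * p * v' 5 3 + lamE * (v' 3 0 + v' 4 0 + v' 5 0) + mu2 * v' 5 2 + mu3 * v' 5 3 := h6' 3
    have P60 : (lam + lamE + mu1 + mu2 + mu3) * v' 6 0 = 1 * π 6 + lam * (1 - p) * v' 5 0 + lam * (1 - p) * v' 6 0 + lam * (1 - p) * v' 7 0 + lamE * v' 0 0 + lamE * v' 1 0 + lamE * v' 6 0 + mu3 * v' 6 3 + mu2 * v' 6 2 := h7' 0
    have P61 : (lam + lamE + mu1 + mu2 + mu3) * v' 6 1 = 1 * π 6 + lam * (1 - p) * 0 + lam * (1 - p) * 0 + lam * (1 - p) * 0 + lamE * v' 0 1 + lamE * v' 1 1 + lamE * v' 6 1 + mu3 * v' 6 1 + mu2 * v' 6 1 := h7' 1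
    have P62 : (lam + lamE + mu1 + mu2 + mu3) * v' 6 2 = 1 * π 6 + lam * (1 - p) * v' 5 2 + lam * (1 - p) * v' 6 2 + lam * (1 - p) * v' 7 2 + lamE * v' 0 2 + lamE * v' 1 2 + lamE * v' 6 2 + mu3 * v' 6 2 + mu2 * v' 6 2 := h7' 2
    have P63 : (lam + lamE + mu1 + mu2 + mu3) * v' 6 3 = 1 * π 6 + lam * (1 - p) * v' 5 3 + lam * (1 - p) * v' 6 3 + lam * (1 - p) * v' 7 3 + lamE * v' 0 0 + lamE * v' 1 0 + lamE * v' 6 0 + mu3 * v' 6 3 + mu2 * v' 6 2 := h7' 3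
    have P70 : (lam + lamE + mu1 + mu2 + mu3) * v' 7 0 = 1 * π 7 + lam * p * v' 6 0 + lamE * v' 2 0 + lamE * v' 7 0 + mu2 * v' 7 2 + mu3 * v' 7 3 + lam * p * v' 7 0 := h8' 0
    have P71 : (lam + lamE + mu1 + mu2 + mu3) * v' 7 1 = 1 * π 7 + lam * p * v' 6 1 + lamE * v' 2 1 + lamE * v' 7 1 + mu2 * v' 7 2 + mu3 * v' 7 1 + lam * p * v' 7 1 := h8' 1
    have P72 : (lam + lamE + mu1 + mu2 + mu3) * v' 7 2 = 1 * π 7 + lam * p * 0 + lamE * v' 2 2 + lamE * v' 7 2 + mu2 * v' 7 2 + mu3 * v' 7 2 + lam * p * 0 := h8' 2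
    have P73 : (lam + lamE + mu1 + mu2 + mu3) * v' 7 3 = 1 * π 7 + lam * p * v' 6 3 + lamE * v' 2 0 + lamE * v' 7 0 + mu2 * v' 7 2 + mu3 * v' 7 3 + lam * p * v' 7 3 := h8' 3
    have hv' : T v' = aoiC π := by
      funext s k
      rcases fin8c s with rfl|rfl|rfl|rfl|rfl|rfl|rfl|rfl <;> rcases fin4c k with rfl|rfl|rfl|rfl
      exacts [(show (lam + lamE + mu1 + mu2 + mu3) * v' 0 0 - (lam * (1 - p) * v' 0 0 + mu2 * v' 0 2 + mu3 * v' 0 3 + lam * (1 - p) * v' 2 0 + lam * (1 - p) * v' 3 0) = 1 * π 0 by linear_combination P00),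
        (show (lam + lamE + mu1 + mu2 + mu3) * v' 0 1 - (mu2 * v' 0 1 + mu3 * v' 0 1) = 1 * π 0 by linear_combination P01),
        (show (lam + lamE + mu1 + mu2 + mu3) * v' 0 2 - (lam * (1 - p) * v' 0 2 + mu2 * v' 0 2 + mu3 * v' 0 2 + lam * (1 - p) * v' 2 2 + lam * (1 - p) * v' 3 2) = 1 * π 0 by linear_combination P02),
        (show (lam + lamE + mu1 + mu2 + mu3) * v' 0 3 - (lam * (1 - p) * v' 0 3 + mu2 * v' 0 2 + mu3 * v' 0 3 + lam * (1 - p) * v' 2 3 + lam * (1 - p) * v' 3 3) = 1 * π 0 by linear_combination P03),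
        (show (lam + lamE + mu1 + mu2 + mu3) * v' 1 0 - (lam * (1 - p) * v' 1 0 + mu2 * v' 1 2 + mu3 * v' 1 3 + lam * (1 - p) * v' 4 0) = 1 * π 1 by linear_combination P10),
        (show (lam + lamE + mu1 + mu2 + mu3) * v' 1 1 - (mu2 * v' 1 1 + mu3 * v' 1 1) = 1 * π 1 by linear_combination P11),
        (show (lam + lamE + mu1 + mu2 + mu3) * v' 1 2 - (lam * (1 - p) * v' 1 2 + mu2 * v' 1 2 + mu3 * v' 1 3 + lam * (1 - p) * v' 4 2) = 1 * π 1 by linear_combination P12),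
        (show (lam + lamE + mu1 + mu2 + mu3) * v' 1 3 - (lam * (1 - p) * v' 1 3 + mu2 * v' 1 3 + mu3 * v' 1 3 + lam * (1 - p) * v' 4 3) = 1 * π 1 by linear_combination P13),
        (show (lam + lamE + mu1 + mu2 + mu3) * v' 2 0 - (lam * p * v' 2 0 + mu2 * v' 2 2 + mu3 * v' 2 3 + lam * p * v' 0 0 + lam * p * v' 1 0) = 1 * π 2 by linear_combination P20),
        (show (lam + lamE + mu1 + mu2 + mu3) * v' 2 1 - (lam * p * v' 2 1 + mu2 * v' 2 2 + mu3 * v' 2 1 + lam * p * v' 0 1 + lam * p * v' 1 1) = 1 * π 2 by linear_combination P21),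
        (show (lam + lamE + mu1 + mu2 + mu3) * v' 2 2 - (mu2 * v' 2 2 + mu3 * v' 2 2) = 1 * π 2 by linear_combination P22),
        (show (lam + lamE + mu1 + mu2 + mu3) * v' 2 3 - (lam * p * v' 2 3 + mu2 * v' 2 2 + mu3 * v' 2 3 + lam * p * v' 0 3 + lam * p * v' 1 3) = 1 * π 2 by linear_combination P23),
        (show (lam + lamE + mu1 + mu2 + mu3 - mu1) * v' 3 0 - (lam * p * (v' 3 0 + v' 4 0) + mu2 * v' 3 2 + mu3 * v' 3 3 + mu1 * (v' 2 0 + v' 7 0)) = 1 * π 3 by linear_combination P30),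
        (show (lam + lamE + mu1 + mu2 + mu3 - mu1) * v' 3 1 - (0) = 0 * π 3 by linear_combination P31),
        (show (lam + lamE + mu1 + mu2 + mu3 - mu1) * v' 3 2 - (mu2 * v' 3 2 + mu3 * v' 3 2 + mu1 * (v' 2 2 + v' 7 2)) = 1 * π 3 by linear_combination P32),
        (show (lam + lamE + mu1 + mu2 + mu3 - mu1) * v' 3 3 - (lam * p * (v' 3 3 + v' 4 3) + mu2 * v' 3 2 + mu3 * v' 3 3 + mu1 * (v' 2 1 + v' 7 1)) = 1 * π 3 by linear_combination P33),
        (show (lam + lamE + mu1 + mu2 + mu3 - mu1) * v' 4 0 - (mu1 * v' 6 0 + mu2 * v' 4 2 + mu3 * v' 4 3 + mu1 * v' 0 0 + mu1 * v' 1 0) = 1 * π 4 by linear_combination P40),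
        (show (lam + lamE + mu1 + mu2 + mu3 - mu1) * v' 4 1 - (0) = 0 * π 4 by linear_combination P41),
        (show (lam + lamE + mu1 + mu2 + mu3 - mu1) * v' 4 2 - (mu1 * v' 6 2 + mu2 * v' 4 2 + mu3 * v' 4 3 + mu1 * v' 0 2 + mu1 * v' 1 2) = 1 * π 4 by linear_combination P42),
        (show (lam + lamE + mu1 + mu2 + mu3 - mu1) * v' 4 3 - (mu1 * v' 6 1 + mu2 * v' 4 3 + mu3 * v' 4 3 + mu1 * v' 0 1 + mu1 * v' 1 1) = 1 * π 4 by linear_combination P43),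
        (show (lam + lamE + mu1 + mu2 + mu3 - mu1) * v' 5 0 - (lam * p * v' 5 0 + lamE * (v' 3 0 + v' 4 0 + v' 5 0) + mu2 * v' 5 2 + mu3 * v' 5 3) = 1 * π 5 by linear_combination P50),
        (show (lam + lamE + mu1 + mu2 + mu3 - mu1) * v' 5 1 - (0) = 0 * π 5 by linear_combination P51),
        (show (lam + lamE + mu1 + mu2 + mu3 - mu1) * v' 5 2 - (lamE * (v' 3 2 + v' 4 2 + v' 5 2) + mu2 * v' 5 2 + mu3 * v' 5 2) = 1 * π 5 by linear_combination P52),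
        (show (lam + lamE + mu1 + mu2 + mu3 - mu1) * v' 5 3 - (lam * p * v' 5 3 + lamE * (v' 3 0 + v' 4 0 + v' 5 0) + mu2 * v' 5 2 + mu3 * v' 5 3) = 1 * π 5 by linear_combination P53),
        (show (lam + lamE + mu1 + mu2 + mu3) * v' 6 0 - (lam * (1 - p) * v' 5 0 + lam * (1 - p) * v' 6 0 + lam * (1 - p) * v' 7 0 + lamE * v' 0 0 + lamE * v' 1 0 + lamE * v' 6 0 + mu3 * v' 6 3 + mu2 * v' 6 2) = 1 * π 6 by linear_combination P60),
        (show (lam + lamE + mu1 + mu2 + mu3) * v' 6 1 - (lamE * v' 0 1 + lamE * v' 1 1 + lamE * v' 6 1 + mu3 * v' 6 1 + mu2 * v' 6 1) = 1 * π 6 by linear_combination P61),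
        (show (lam + lamE + mu1 + mu2 + mu3) * v' 6 2 - (lam * (1 - p) * v' 5 2 + lam * (1 - p) * v' 6 2 + lam * (1 - p) * v' 7 2 + lamE * v' 0 2 + lamE * v' 1 2 + lamE * v' 6 2 + mu3 * v' 6 2 + mu2 * v' 6 2) = 1 * π 6 by linear_combination P62),
        (show (lam + lamE + mu1 + mu2 + mu3) * v' 6 3 - (lam * (1 - p) * v' 5 3 + lam * (1 - p) * v' 6 3 + lam * (1 - p) * v' 7 3 + lamE * v' 0 0 + lamE * v' 1 0 + lamE * v' 6 0 + mu3 * v' 6 3 + mu2 * v' 6 2) = 1 * π 6 by linear_combination P63),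
        (show (lam + lamE + mu1 + mu2 + mu3) * v' 7 0 - (lam * p * v' 6 0 + lamE * v' 2 0 + lamE * v' 7 0 + mu2 * v' 7 2 + mu3 * v' 7 3 + lam * p * v' 7 0) = 1 * π 7 by linear_combination P70),
        (show (lam + lamE + mu1 + mu2 + mu3) * v' 7 1 - (lam * p * v' 6 1 + lamE * v' 2 1 + lamE * v' 7 1 + mu2 * v' 7 2 + mu3 * v' 7 1 + lam * p * v' 7 1) = 1 * π 7 by linear_combination P71),
        (show (lam + lamE + mu1 + mu2 + mu3) * v' 7 2 - (lamE * v' 2 2 + lamE * v' 7 2 + mu2 * v' 7 2 + mu3 * v' 7 2) = 1 * π 7 by linear_combination P72),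
        (show (lam + lamE + mu1 + mu2 + mu3) * v' 7 3 - (lam * p * v' 6 3 + lamE * v' 2 0 + lamE * v' 7 0 + mu2 * v' 7 2 + mu3 * v' 7 3 + lam * p * v' 7 3) = 1 * π 7 by linear_combination P73)]
    exact hinj (hv'.trans hv.symm)
  · have hv00 : 0 < v 0 0 := by
      by_contra hcon
      push_neg at hcon
      linarith [G00, hpos 0, mul_nonneg hr.le (hnn 2 0), mul_nonneg hr.le (hnn 3 0),
        mul_nonneg hmu2.le (hnn 0 2), mul_nonneg hmu3.le (hnn 0 3),
        mul_nonneg hq.le (neg_nonneg.mpr hcon), mul_nonneg hlamE.le (neg_nonneg.mpr hcon),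
        mul_nonneg hmu1.le (neg_nonneg.mpr hcon), mul_nonneg hmu2.le (neg_nonneg.mpr hcon),
        mul_nonneg hmu3.le (neg_nonneg.mpr hcon)]
    rw [Fin.sum_univ_eight]
    linarith [hv00, hnn 1 0, hnn 2 0, hnn 3 0, hnn 4 0, hnn 5 0, hnn 6 0, hnn 7 0]

end AoIAux
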